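/- arXiv:0803.3098 — 8 statements merged into one kernel-verified Lean document; each statement's English description precedes it below -/
import Mathlib

section
/- For all real numbers 0 < α < 1 and θ > 0, and all integers n ≥ 1 and 1 ≤ m ≤ n+1, the decrement matrix satisfies the recursion q_{α,θ}(n+1, m) = q_{α,θ}(n, m−1)·(m−1−α)/(n+θ) + q_{α,θ}(n, m)·(n+θ−m)/(n+θ) + (α/(n+θ))·1_{{m=1}}, where by convention q_{α,θ}(n, m) = 0 whenever m ≤ 0 or m > n. -/
/-- Rising factorial `[x]_j = x (x+1) ⋯ (x+j-1)`, with `[x]_0 = 1`. -/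
noncomputable def risingFactorial (x : ℝ) : ℕ → ℝ
  | 0 => 1
  | n + 1 => risingFactorial x n * (x + n)

/-- The decrement matrix
`q_{α,θ}(n, m) = C(n,m) · ((n−m)α + mθ)/n · [1−α]_{m−1} / [n−m+θ]_m` for `1 ≤ m ≤ n`,
and `q_{α,θ}(n, m) = 0` otherwise. -/
noncomputable def decrementMatrix (α θ : ℝ) (n m : ℕ) : ℝ :=
  if 1 ≤ m ∧ m ≤ n then
    (n.choose m : ℝ) * ((((n : ℝ) - m) * α + m * θ) / n) *
      risingFactorial (1 - α) (m - 1) / risingFactorial ((n : ℝ) - m + θ) m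
  else 0

/-!
Write `q(p+1, k+1) = w(p,k) [1-α]_k / [p-k+θ]_{k+1}` with the weight
`w(p,k) = α C(p,k+1) + θ C(p,k)`. Cancelling the last factor `p+1+θ` of the Pochhammer symbol
in the denominator of `q(p+2, k+1)`, and the first factor `p-k+θ` in that of `q(p+1, k+1)`, puts
`(p+1+θ) q(p+2, k+1)` and `(p-k+θ) q(p+1, k+1)` over the common denominator `[p-k+1+θ]_k`.
Their difference is `w(p+1,k) - w(p,k)`, which by Pascal's rule is `w(p,k-1)` (giving the
`q(p+1, k)` term) for `k ≥ 1`, and `α` for `k = 0`.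
-/

theorem risingFactorial_eq_eval_ascPochhammer (x : ℝ) (n : ℕ) :
    risingFactorial x n = (ascPochhammer ℝ n).eval x := by
  induction n with
  | zero => simp [risingFactorial]
  | succ n ih => rw [risingFactorial, ih, ascPochhammer_succ_eval]

theorem risingFactorial_succ (x : ℝ) (n : ℕ) :
    risingFactorial x (n + 1) = risingFactorial x n * (x + n) := rfl

theorem risingFactorial_succ' (x : ℝ) (n : ℕ) :
    risingFactorial x (n + 1) = x * risingFactorial (x + 1) n := by
  simp only [risingFactorial_eq_eval_ascPochhammer, ascPochhammer_succ_left, Polynomial.eval_mul,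
    Polynomial.eval_X, Polynomial.eval_comp, Polynomial.eval_add, Polynomial.eval_one]

/-- The factor `C(n,m) ((n-m)α + mθ) / n` of `decrementMatrix` at `n = p + 1`, `m = k + 1`,
rewritten (`decrementWeight_eq`) in a form that obeys Pascal's rule. -/
def decrementWeight (α θ : ℝ) (p k : ℕ) : ℝ :=
  α * p.choose (k + 1) + θ * p.choose k

section
variable (α θ : ℝ)

theorem decrementWeight_succ_zero (p : ℕ) :
    decrementWeight α θ (p + 1) 0 = decrementWeight α θ p 0 + α := by
  simp only [decrementWeight, zero_add, Nat.choose_one_right, Nat.choose_zero_right, Nat.cast_add,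
    Nat.cast_one]
  ring

theorem decrementWeight_succ_succ (p k : ℕ) :
    decrementWeight α θ (p + 1) (k + 1) =
      decrementWeight α θ p k + decrementWeight α θ p (k + 1) := by
  simp only [decrementWeight, Nat.choose_succ_succ', Nat.cast_add]
  ring

theorem decrementWeight_eq_zero {p k : ℕ} (h : p < k) : decrementWeight α θ p k = 0 := by
  simp [decrementWeight, Nat.choose_eq_zero_of_lt h,
    Nat.choose_eq_zero_of_lt (h.trans k.lt_succ_self)]

theorem decrementWeight_eq (p k : ℕ) :
    decrementWeight α θ p k =
      (p + 1).choose (k + 1) * ((((p : ℝ) - k) * α + (k + 1) * θ) / (p + 1)) := by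
  have pascal : ((p + 1).choose (k + 1) : ℝ) = p.choose k + p.choose (k + 1) := by
    exact_mod_cast Nat.choose_succ_succ' p k
  have absorb : ((p : ℝ) + 1) * p.choose k = (p + 1).choose (k + 1) * (k + 1) := by
    exact_mod_cast Nat.add_one_mul_choose_eq p k
  rw [mul_div_assoc', eq_div_iff (by positivity), decrementWeight]
  linear_combination (θ - α) * absorb - α * ((p : ℝ) + 1) * pascal

theorem decrementMatrix_zero_right (n : ℕ) : decrementMatrix α θ n 0 = 0 := by
  simp [decrementMatrix]

theorem decrementMatrix_succ_succ (p k : ℕ) :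
    decrementMatrix α θ (p + 1) (k + 1) =
      decrementWeight α θ p k * risingFactorial (1 - α) k /
        risingFactorial ((p : ℝ) - k + θ) (k + 1) := by
  rw [decrementMatrix]
  split_ifs with h
  · have hbase : ((p + 1 : ℕ) : ℝ) - ((k + 1 : ℕ) : ℝ) + θ = p - k + θ := by push_cast; ring
    rw [hbase, Nat.add_sub_cancel, decrementWeight_eq]
    push_cast
    ring
  · simp [decrementWeight_eq_zero α θ (by omega : p < k)]

theorem decrementMatrix_succ_succ_mul_last_factor {p : ℕ} (h : (p : ℝ) + θ ≠ 0) (k : ℕ) :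
    decrementMatrix α θ (p + 1) (k + 1) * ((p : ℝ) + θ) =
      decrementWeight α θ p k * risingFactorial (1 - α) k /
        risingFactorial ((p : ℝ) - k + θ) k := by
  rw [decrementMatrix_succ_succ, risingFactorial_succ, show (p : ℝ) - k + θ + k = p + θ by ring,
    div_mul_eq_mul_div, mul_div_mul_right _ _ h]

theorem decrementMatrix_succ_succ_mul_first_factor (hθ : 0 < θ) (p k : ℕ) :
    decrementMatrix α θ (p + 1) (k + 1) * ((p : ℝ) - k + θ) =
      decrementWeight α θ p k * risingFactorial (1 - α) k /
        risingFactorial ((p : ℝ) - k + θ + 1) k := by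
  rcases le_or_gt k p with hk | hk
  · have hpos : 0 < (p : ℝ) - k + θ := by
      have : (k : ℝ) ≤ p := by exact_mod_cast hk
      linarith
    rw [decrementMatrix_succ_succ, risingFactorial_succ', div_mul_eq_mul_div,
      mul_comm ((p : ℝ) - k + θ), mul_div_mul_right _ _ hpos.ne']
  · simp [decrementMatrix_succ_succ, decrementWeight_eq_zero α θ hk]

theorem decrementMatrix_recursion_mul (hθ : 0 < θ) (p k : ℕ) :
    decrementMatrix α θ (p + 2) (k + 1) * ((p : ℝ) + 1 + θ) =
      decrementMatrix α θ (p + 1) k * ((k : ℝ) - α) +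
        decrementMatrix α θ (p + 1) (k + 1) * ((p : ℝ) - k + θ) + α * if k = 0 then 1 else 0 := by
  have hnext := decrementMatrix_succ_succ_mul_last_factor α θ (p := p + 1) (by positivity) k
  rw [show ((p + 1 : ℕ) : ℝ) - k + θ = p - k + θ + 1 by push_cast; ring] at hnext
  push_cast at hnext
  rw [hnext, decrementMatrix_succ_succ_mul_first_factor α θ hθ]
  cases k with
  | zero =>
    simp only [decrementWeight_succ_zero, decrementMatrix_zero_right, risingFactorial, if_true]
    ring
  | succ j =>
    rw [decrementMatrix_succ_succ, decrementWeight_succ_succ, risingFactorial_succ (1 - α) j,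
      show (p : ℝ) - ((j + 1 : ℕ) : ℝ) + θ + 1 = p - j + θ by push_cast; ring, if_neg j.succ_ne_zero]
    push_cast
    ring

end

theorem decrementMatrix_recursion_general (α θ : ℝ) (hθ : 0 < θ)
    (n m : ℕ) (hn : 1 ≤ n) :
    decrementMatrix α θ (n + 1) m
      = decrementMatrix α θ n (m - 1) * (((m : ℝ) - 1 - α) / ((n : ℝ) + θ))
        + decrementMatrix α θ n m * (((n : ℝ) + θ - m) / ((n : ℝ) + θ))
        + (α / ((n : ℝ) + θ)) * (if m = 1 then 1 else 0) := by
  obtain ⟨p, rfl⟩ := Nat.exists_eq_add_of_le' hn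
  rcases m with _ | k
  · simp [decrementMatrix_zero_right]
  · have hpθ : ((p + 1 : ℕ) : ℝ) + θ ≠ 0 := by positivity
    have key := decrementMatrix_recursion_mul α θ hθ p k
    rw [← mul_left_inj' hpθ]
    push_cast at key ⊢
    field_simp
    linear_combination key

/-- the recursion satisfied by the decrement matrix. -/
theorem decrementMatrix_recursion (α θ : ℝ) (hα0 : 0 < α) (hα1 : α < 1) (hθ : 0 < θ)
    (n m : ℕ) (hn : 1 ≤ n) (hm1 : 1 ≤ m) (hm2 : m ≤ n + 1) :
    decrementMatrix α θ (n + 1) m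
      = decrementMatrix α θ n (m - 1) * (((m : ℝ) - 1 - α) / ((n : ℝ) + θ))
        + decrementMatrix α θ n m * (((n : ℝ) + θ - m) / ((n : ℝ) + θ))
        + (α / ((n : ℝ) + θ)) * (if m = 1 then 1 else 0) :=
  decrementMatrix_recursion_general α θ hθ n m hn
end

section
/- For all real numbers 0 < α < 1 and θ > 0, and every integer n ≥ 1, the decrement matrix is a probability distribution on {1,…,n}: ∑_{m=1}^{n} q_{α,θ}(n, m) = 1. -/
/-! Write `n = N + 1` and `B k = C(N, k) [1-α]_k [θ]_{N+1-k}`. The identities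
`C(N, k) = C(n, k+1) (k+1)/n` and `C(N, k+1) = C(n, k+1) (n-k-1)/n` give
`q(n, k+1) [θ]_n = B k - B (k+1)`, so the sum telescopes to `(B 0 - B n) / [θ]_n = 1`. -/

lemma risingFactorial_pos {x : ℝ} (hx : 0 < x) : ∀ j : ℕ, 0 < risingFactorial x j
  | 0 => one_pos
  | j + 1 => mul_pos (risingFactorial_pos hx j) (by positivity)

lemma risingFactorial_add (x : ℝ) (a : ℕ) : ∀ b : ℕ,
    risingFactorial x (a + b) = risingFactorial x a * risingFactorial (x + a) b
  | 0 => (mul_one _).symm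
  | b + 1 => by
      rw [← add_assoc, risingFactorial, risingFactorial, risingFactorial_add x a b]
      push_cast
      ring

noncomputable def decrementPotential (α θ : ℝ) (N k : ℕ) : ℝ :=
  N.choose k * risingFactorial (1 - α) k * risingFactorial θ (N + 1 - k)

lemma decrementMatrix_mul_risingFactorial {α θ : ℝ} (hθ : 0 < θ) {N k : ℕ} (hk : k ≤ N) :
    decrementMatrix α θ (N + 1) (k + 1) * risingFactorial θ (N + 1) =
      decrementPotential α θ N k - decrementPotential α θ N (k + 1) := by
  obtain ⟨a, rfl⟩ := Nat.exists_eq_add_of_le hk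
  have hsplit : risingFactorial θ (k + a + 1) =
      risingFactorial θ a * risingFactorial (θ + a) (k + 1) := by
    rw [← risingFactorial_add, show a + (k + 1) = k + a + 1 by omega]
  have hchoose_k :
      ((k + a + 1 : ℕ) : ℝ) * (k + a).choose k = (k + a + 1).choose (k + 1) * (k + 1) := by
    exact_mod_cast Nat.add_one_mul_choose_eq (k + a) k
  have hchoose_k1 :
      ((k + a).choose (k + 1) : ℝ) * (k + a + 1 : ℕ) = (k + a + 1).choose (k + 1) * a := by
    have := Nat.choose_mul_succ_eq (k + a) (k + 1)
    rw [show k + a + 1 - (k + 1) = a by omega] at this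
    exact_mod_cast this
  have hden : (((k + a + 1 : ℕ) : ℝ) - (k + 1 : ℕ) + θ) = θ + a := by push_cast; ring
  have hD := (risingFactorial_pos (by positivity : 0 < θ + a) (k + 1)).ne'
  rw [decrementMatrix, if_pos ⟨by omega, by omega⟩, hden, hsplit, decrementPotential,
    decrementPotential, show k + a + 1 - k = a + 1 by omega, show k + a + 1 - (k + 1) = a by omega,
    risingFactorial.eq_2 (1 - α) k, risingFactorial.eq_2 θ a]
  field_simp
  push_cast at hchoose_k hchoose_k1 ⊢
  linear_combination risingFactorial (1 - α) k * risingFactorial θ a *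
    ((1 - α + k) * hchoose_k1 - (θ + a) * hchoose_k)

theorem decrementMatrix_sum_eq_one_general (α θ : ℝ) (hθ : 0 < θ)
    (n : ℕ) (hn : 1 ≤ n) :
    ∑ m ∈ Finset.Icc 1 n, decrementMatrix α θ n m = 1 := by
  obtain ⟨N, rfl⟩ := Nat.exists_eq_add_of_le' hn
  have hT := (risingFactorial_pos hθ (N + 1)).ne'
  have hterm : ∀ k ∈ Finset.range (N + 1), decrementMatrix α θ (N + 1) (k + 1) =
      (decrementPotential α θ N k - decrementPotential α θ N (k + 1)) /
        risingFactorial θ (N + 1) := fun k hk ↦ by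
    rw [← decrementMatrix_mul_risingFactorial hθ (Nat.lt_succ_iff.mp (Finset.mem_range.mp hk)),
      mul_div_cancel_right₀ _ hT]
  rw [← Finset.Ico_add_one_right_eq_Icc, ← zero_add 1, ← Finset.sum_Ico_add',
    ← Finset.range_eq_Ico, Finset.sum_congr rfl hterm, ← Finset.sum_div, Finset.sum_range_sub']
  have hfirst : decrementPotential α θ N 0 = risingFactorial θ (N + 1) := by
    simp [decrementPotential, risingFactorial.eq_1]
  have hlast : decrementPotential α θ N (N + 1) = 0 := by simp [decrementPotential]
  rw [hfirst, hlast, sub_zero, div_self hT]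

/-- the decrement matrix is a probability distribution on `{1, …, n}`. -/
theorem decrementMatrix_sum_eq_one (α θ : ℝ) (hα0 : 0 < α) (hα1 : α < 1) (hθ : 0 < θ)
    (n : ℕ) (hn : 1 ≤ n) :
    ∑ m ∈ Finset.Icc 1 n, decrementMatrix α θ n m = 1 :=
  decrementMatrix_sum_eq_one_general α θ hθ n hn
end

section
/- For every integer k ≥ 1 and every permutation π of {1,…,k}, the table-order Markov chain satisfies P(σ_k = π) = (θ/α)^{R(π)} / [θ/α]_k, where R(π) is the number of record values of π and [x]_k = x(x+1)⋯(x+k−1). -/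
/-- Number of record values of a permutation `π` of `{0,…,k−1}`:
`R(π) = #{ j : π(i) < π(j) for all i < j }`. -/
def numRecords {k : ℕ} (π : Equiv.Perm (Fin k)) : ℕ :=
  (Finset.univ.filter fun j : Fin k => ∀ i, i < j → π i < π j).card

/-- The law of the table-order Markov chain `(σ_k, k ≥ 1)` with parameters `(α, θ)`:
`σ₁` is the identity; given `σ_k`, the new table `k+1` is placed at the right-most
position (i.e. `σ_{k+1}(k+1) = k+1`, here expressed 0-indexed as
`π (Fin.last k) = Fin.last k`) with probability `θ/(kα+θ)`, and at each of the other
`k` positions with probability `α/(kα+θ)`; the positions of the old tables are shifted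
accordingly: `σ_{k+1}(j) = σ_k(j) + 1{σ_{k+1}(k+1) ≤ σ_k(j)}`. -/
noncomputable def tableOrderLaw (α θ : ℝ) : (k : ℕ) → Equiv.Perm (Fin k) → ℝ
  | 0, _ => 1
  | k + 1, π =>
      ∑ σ : Equiv.Perm (Fin k),
        tableOrderLaw α θ k σ *
          (if ∀ j : Fin k, (π j.castSucc : ℕ)
              = (σ j : ℕ) + (if (π (Fin.last k) : ℕ) ≤ (σ j : ℕ) then 1 else 0) then
            (if π (Fin.last k) = Fin.last k then θ / (k * α + θ) else α / (k * α + θ))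
          else 0)


/-! Every permutation `π` of the first `k + 1` tables has exactly one predecessor under the chain,
namely the relative order `π.removeLast` of the first `k` tables. Writing `x = θ / α`, the step
multiplies the probability by `x / (x + k)` when the new table goes to the right end, which creates
one new record, and by `1 / (x + k)` otherwise, which creates none; the records among the old tables
are unchanged. Induction on `k` then gives `x ^ R(π) / [x]_k`. -/

lemma Fin.val_succAbove {k : ℕ} (p : Fin (k + 1)) (i : Fin k) :
    (p.succAbove i : ℕ) = i + if (p : ℕ) ≤ i then 1 else 0 := by
  rcases lt_or_ge i.castSucc p with h | h
  · rw [Fin.succAbove_of_castSucc_lt _ _ h, if_neg (by simpa [Fin.lt_def] using h)]; rfl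
  · rw [Fin.succAbove_of_le_castSucc _ _ h, if_pos (by simpa [Fin.le_def] using h)]; rfl

namespace Equiv.Perm

variable {k : ℕ}

/-- The relative order of the first `k` tables under `π`: the state of the chain before the last
table arrived. -/
def removeLast (π : Perm (Fin (k + 1))) : Perm (Fin k) :=
  (finSuccAboveEquiv (Fin.last k)).trans
    ((π.subtypeEquiv (p := (· ≠ Fin.last k)) fun _ => π.injective.ne_iff.symm).trans
      (finSuccAboveEquiv (π (Fin.last k))).symm)

theorem succAbove_removeLast (π : Perm (Fin (k + 1))) (j : Fin k) :
    (π (Fin.last k)).succAbove (π.removeLast j) = π j.castSucc :=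
  (congrArg Subtype.val ((finSuccAboveEquiv _).apply_symm_apply _)).trans
    (by simp [finSuccAboveEquiv_apply])

theorem eq_removeLast_iff (π : Perm (Fin (k + 1))) (σ : Perm (Fin k)) :
    σ = π.removeLast ↔ ∀ j, π j.castSucc = (π (Fin.last k)).succAbove (σ j) := by
  simp only [← succAbove_removeLast, Fin.succAbove_right_injective.eq_iff,
    eq_comm (a := π.removeLast _), Equiv.ext_iff]

theorem removeLast_lt_removeLast_iff (π : Perm (Fin (k + 1))) {i j : Fin k} :
    π.removeLast i < π.removeLast j ↔ π i.castSucc < π j.castSucc := by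
  rw [← succAbove_removeLast, ← succAbove_removeLast, Fin.succAbove_lt_succAbove_iff]

theorem isRecord_castSucc_iff (π : Perm (Fin (k + 1))) (j : Fin k) :
    (∀ i < j.castSucc, π i < π j.castSucc) ↔ ∀ i < j, π.removeLast i < π.removeLast j := by
  simp [Fin.forall_fin_succ', Fin.castSucc_lt_castSucc_iff, removeLast_lt_removeLast_iff,
    (Fin.castSucc_lt_last j).not_gt]

theorem isRecord_last_iff (π : Perm (Fin (k + 1))) :
    (∀ i < Fin.last k, π i < π (Fin.last k)) ↔ π (Fin.last k) = Fin.last k := by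
  simp only [Fin.lt_last_iff_ne_last]
  constructor
  · intro h
    obtain ⟨i, hi⟩ := π.surjective (Fin.last k)
    by_contra hne
    exact (h i (by rintro rfl; exact hne hi)).not_ge (hi ▸ Fin.le_last (π (Fin.last k)))
  · intro h i hi
    rw [h, Fin.lt_last_iff_ne_last, ← h]
    exact π.injective.ne hi

theorem numRecords_eq_numRecords_removeLast_add (π : Perm (Fin (k + 1))) :
    numRecords π = numRecords π.removeLast + if π (Fin.last k) = Fin.last k then 1 else 0 := by
  simp only [numRecords, Finset.card_filter, Fin.sum_univ_castSucc, isRecord_castSucc_iff,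
    isRecord_last_iff]

end Equiv.Perm

theorem tableOrderLaw_succ (α θ : ℝ) (k : ℕ) (π : Equiv.Perm (Fin (k + 1))) :
    tableOrderLaw α θ (k + 1) π = tableOrderLaw α θ k π.removeLast *
      if π (Fin.last k) = Fin.last k then θ / (k * α + θ) else α / (k * α + θ) := by
  have shift_iff : ∀ σ : Equiv.Perm (Fin k), (∀ j : Fin k, (π j.castSucc : ℕ)
      = (σ j : ℕ) + (if (π (Fin.last k) : ℕ) ≤ (σ j : ℕ) then 1 else 0)) ↔ σ = π.removeLast := by
    intro σ
    simp only [← Fin.val_succAbove, Fin.val_inj, Equiv.Perm.eq_removeLast_iff]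
  rw [tableOrderLaw, Fintype.sum_eq_single π.removeLast, if_pos ((shift_iff _).2 rfl)]
  intro σ hσ
  rw [if_neg (mt (shift_iff σ).1 hσ), mul_zero]

theorem tableOrderLaw_eq_div_risingFactorial {α : ℝ} (hα : α ≠ 0) (θ : ℝ) (k : ℕ)
    (π : Equiv.Perm (Fin k)) :
    tableOrderLaw α θ k π = (θ / α) ^ numRecords π / risingFactorial (θ / α) k := by
  induction k with
  | zero => simp [tableOrderLaw, numRecords, risingFactorial]
  | succ k ih =>
    -- with `x = θ / α`, the two transition probabilities are `x / (x + k)` and `1 / (x + k)`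
    have hdenom : k * α + θ = α * (θ / α + k) := by field_simp; ring
    rw [tableOrderLaw_succ, ih, π.numRecords_eq_numRecords_removeLast_add, risingFactorial,
      hdenom]
    split_ifs
    · rw [pow_succ, mul_div_mul_comm, div_mul_eq_div_div]
    · rw [add_zero, div_mul_cancel_left₀ hα, ← div_eq_mul_inv, div_div]

theorem tableOrderLaw_eq_general (α θ : ℝ) (hα0 : 0 < α)
    (k : ℕ) (π : Equiv.Perm (Fin k)) :
    tableOrderLaw α θ k π = (θ / α) ^ numRecords π / risingFactorial (θ / α) k :=
  tableOrderLaw_eq_div_risingFactorial hα0.ne' θ k π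

/-- `P(σ_k = π) = (θ/α)^{R(π)} / [θ/α]_k`. -/
theorem tableOrderLaw_eq (α θ : ℝ) (hα0 : 0 < α) (hα1 : α < 1) (hθ : 0 < θ)
    (k : ℕ) (hk : 1 ≤ k) (π : Equiv.Perm (Fin k)) :
    tableOrderLaw α θ k π = (θ / α) ^ numRecords π / risingFactorial (θ / α) k :=
  tableOrderLaw_eq_general α θ hα0 k π
end

section
/- In the ordered Chinese Restaurant Process chain of ordered set partitions of {1,…,n}, conditionally given that the list of block sizes equals a composition (n₁,…,n_ℓ) of n, the conditional probability that the element 1 lies in the k-th block (of size n_k) equals p_k · ∏_{j=1}^{k−1} (1 − p_j), where p_j = n_j θ / (n_j θ + N_{j+1} α) and N_{j+1} = ∑_{i=j+1}^{ℓ} n_i, for every 1 ≤ k ≤ ℓ. -/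
/-- The law of the ordered set partition `Π̃_n` of `{1,…,n}` generated by the ordered
Chinese Restaurant Process with parameters `(α, θ)`: `Π̃₀` is the empty list; given
`Π̃_n = (B₁,…,B_k)`, customer `n+1` joins block `B_j` with probability
`(|B_j|−α)/(n+θ)`, forms a new singleton block inserted immediately to the left of `B_j`
with probability `α/(n+θ)`, and forms a new singleton block appended at the right end
with probability `θ/(n+θ)`.  (In particular `Π̃₁ = ({1})` almost surely.)  The recursion
computes the probability mass function by locating the block of `P` containing the last
customer `n+1`. -/
noncomputable def ocrpPartLaw (α θ : ℝ) : ℕ → List (Finset ℕ) → ℝ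
  | 0, P => if P = [] then 1 else 0
  | n + 1, P =>
      ∑ j ∈ Finset.range P.length,
        (if n + 1 ∈ P.getD j ∅ then
          (if P.getD j ∅ = {n + 1} then
            (if j + 1 = P.length then ocrpPartLaw α θ n (P.eraseIdx j) * (θ / ((n : ℝ) + θ))
             else ocrpPartLaw α θ n (P.eraseIdx j) * (α / ((n : ℝ) + θ)))
          else
            ocrpPartLaw α θ n (P.set j (P.getD j ∅ \ {n + 1})) *
              ((((P.getD j ∅).card : ℝ) - 1 - α) / ((n : ℝ) + θ)))
        else 0)

/-- The switching probability `p_j = n_j θ / (n_j θ + N_{j+1} α)` for a composition `c`,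
where `N_{j+1} = n_{j+1} + ⋯ + n_ℓ` (`j` is 0-indexed here). -/
noncomputable def switchProb (α θ : ℝ) (c : List ℕ) (j : ℕ) : ℝ :=
  ((c.getD j 0 : ℝ) * θ) / ((c.getD j 0 : ℝ) * θ + ((c.drop (j + 1)).sum : ℝ) * α)

/-!
Unwinding the recursion gives the closed form of the law: an ordered partition `(B₁, …, B_ℓ)`
of `{1, …, n}` has probability `∏ᵢ (1 - α)_{|Bᵢ| - 1} · ∏ᵢ wᵢ / (θ)_n`, where `wᵢ = θ` if `Bᵢ`
contains an element below all elements of the later blocks and `wᵢ = α` otherwise. Given the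
block sizes `c`, only `∏ᵢ wᵢ` varies. Summing it over the ordered partitions of a set of `N`
elements, block by block: a first block of size `m` contains the least element (weight `θ`) in
`C(N-1, m-1)` ways and misses it (weight `α`) in `C(N-1, m)` ways, and
`C(N-1, m-1) θ / (C(N-1, m-1) θ + C(N-1, m) α) = p₁`. Iterating over the first `k` blocks
gives `p_k ∏_{j<k} (1 - p_j)`.
-/

open Finset

lemma sum_powersetCard_ite_mem {ι M : Type*} [DecidableEq ι] [AddCommMonoid M] {A : Finset ι}
    {a : ι} (ha : a ∈ A) {m : ℕ} (hm : 0 < m) (t f : M) :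
    ∑ S ∈ A.powersetCard m, (if a ∈ S then t else f) =
      (#A - 1).choose (m - 1) • t + (#A - 1).choose m • f := by
  have hin : #{S ∈ A.powersetCard m | a ∈ S} = (#A - 1).choose (m - 1) := by
    simpa [singleton_subset_iff] using card_filter_powersetCard_subset {a} A m
      (singleton_subset_iff.2 ha) (by rw [card_singleton]; exact hm)
  have hout : #{S ∈ A.powersetCard m | a ∉ S} = (#A - 1).choose m := by
    have h := card_filter_add_card_filter_not (s := A.powersetCard m) (fun S => a ∈ S)
    obtain ⟨N, hN⟩ : ∃ N, #A = N + 1 := ⟨#A - 1, by have := card_pos.2 ⟨a, ha⟩; omega⟩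
    obtain ⟨k, rfl⟩ : ∃ k, m = k + 1 := ⟨m - 1, by omega⟩
    rw [card_powersetCard, hN, Nat.choose_succ_succ', hin, hN] at h
    simp only [hN, Nat.add_sub_cancel] at h ⊢
    omega
  rw [sum_ite, sum_const, sum_const, hin, hout]

lemma tsum_subtype_eq_sum_filter {β M : Type*} [AddCommMonoid M] [TopologicalSpace M]
    (p : β → Prop) [DecidablePred p] (f : β → M) (s : Finset β)
    (hf : ∀ x, p x → x ∉ s → f x = 0) :
    ∑' x : {x // p x}, f x = ∑ x ∈ s with p x, f x := by
  rw [tsum_eq_sum (s := s.subtype p) fun x hx => hf x x.2 (by simpa using hx),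
    sum_subtype_eq_sum_filter]

lemma choose_pred_mul_eq_choose_mul {m : ℕ} (hm : 0 < m) (N : ℕ) :
    (m + N - 1).choose (m - 1) * N = (m + N - 1).choose m * m := by
  have h := Nat.choose_succ_right_eq (m + N - 1) (m - 1)
  rwa [Nat.sub_add_cancel hm, show m + N - 1 - (m - 1) = N by omega, eq_comm] at h

namespace OrderedCRP

def blocksUnion (P : List (Finset ℕ)) : Finset ℕ := P.foldr (· ∪ ·) ∅

@[simp] lemma blocksUnion_nil : blocksUnion [] = ∅ := rfl

@[simp] lemma blocksUnion_cons (B : Finset ℕ) (L : List (Finset ℕ)) :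
    blocksUnion (B :: L) = B ∪ blocksUnion L := rfl

lemma blocksUnion_append (L₁ L₂ : List (Finset ℕ)) :
    blocksUnion (L₁ ++ L₂) = blocksUnion L₁ ∪ blocksUnion L₂ := by
  induction L₁ with
  | nil => simp
  | cons B L ih => simp [ih, union_assoc]

lemma mem_blocksUnion {x : ℕ} {P : List (Finset ℕ)} : x ∈ blocksUnion P ↔ ∃ B ∈ P, x ∈ B := by
  induction P with
  | nil => simp
  | cons C L ih => simp [ih]

lemma subset_blocksUnion {B : Finset ℕ} {P : List (Finset ℕ)} (h : B ∈ P) : B ⊆ blocksUnion P :=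
  fun _ hx => mem_blocksUnion.2 ⟨B, h, hx⟩

lemma getD_subset_blocksUnion (P : List (Finset ℕ)) (k : ℕ) : P.getD k ∅ ⊆ blocksUnion P := by
  rw [List.getD_eq_getElem?_getD]
  cases h : P[k]? with
  | none => simp
  | some B => exact subset_blocksUnion (List.mem_of_getElem? h)

lemma sum_ite_mem_getD {M : Type*} [AddCommMonoid M] {P : List (Finset ℕ)}
    (hP : P.Pairwise Disjoint) {x : ℕ} (hx : x ∈ blocksUnion P) (y : M) :
    ∑ j ∈ range P.length, (if x ∈ P.getD j ∅ then y else 0) = y := by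
  obtain ⟨B, hB, hxB⟩ := mem_blocksUnion.1 hx
  obtain ⟨i, hi, rfl⟩ := List.getElem_of_mem hB
  rw [sum_eq_single_of_mem i (mem_range.2 hi), List.getD_eq_getElem _ _ hi, if_pos hxB]
  intro j hj hji
  rw [List.getD_eq_getElem _ _ (mem_range.1 hj), if_neg]
  intro hxj
  rcases lt_or_gt_of_ne hji with h | h
  · exact disjoint_left.1 (List.pairwise_iff_getElem.1 hP j i _ hi h) hxj hxB
  · exact disjoint_left.1 (List.pairwise_iff_getElem.1 hP i j hi _ h) hxB hxj

lemma blocksUnion_middle (L₁ L₂ : List (Finset ℕ)) (B : Finset ℕ) :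
    blocksUnion (L₁ ++ B :: L₂) = B ∪ blocksUnion (L₁ ++ L₂) := by
  ext x
  simp only [mem_blocksUnion, mem_union, List.perm_middle.mem_iff, List.mem_cons]
  grind

def IsOrderedPartition (A : Finset ℕ) (P : List (Finset ℕ)) : Prop :=
  P.Pairwise Disjoint ∧ (∀ B ∈ P, B.Nonempty) ∧ blocksUnion P = A

lemma IsOrderedPartition.subset {A : Finset ℕ} {P : List (Finset ℕ)}
    (hP : IsOrderedPartition A P) {B : Finset ℕ} (hB : B ∈ P) : B ⊆ A :=
  hP.2.2 ▸ subset_blocksUnion hB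

lemma IsOrderedPartition.le_of_mem {n : ℕ} {P : List (Finset ℕ)}
    (hP : IsOrderedPartition (Icc 1 n) P) {C : Finset ℕ} (hC : C ∈ P) {x : ℕ} (hx : x ∈ C) :
    x ≤ n :=
  (mem_Icc.1 (hP.subset hC hx)).2

@[simp] lemma isOrderedPartition_nil (A : Finset ℕ) : IsOrderedPartition A [] ↔ A = ∅ := by
  simp [IsOrderedPartition, eq_comm]

lemma isOrderedPartition_cons {A B : Finset ℕ} {L : List (Finset ℕ)} :
    IsOrderedPartition A (B :: L) ↔ B.Nonempty ∧ B ⊆ A ∧ IsOrderedPartition (A \ B) L := by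
  simp only [IsOrderedPartition, List.pairwise_cons, List.mem_cons, forall_eq_or_imp,
    blocksUnion_cons]
  constructor
  · rintro ⟨⟨hdisj, hpw⟩, ⟨hB, hne⟩, rfl⟩
    have : Disjoint B (blocksUnion L) :=
      disjoint_left.2 fun x hxB hxL => by
        obtain ⟨C, hC, hxC⟩ := mem_blocksUnion.1 hxL
        exact disjoint_left.1 (hdisj C hC) hxB hxC
    exact ⟨hB, subset_union_left, hpw, hne, (union_sdiff_cancel_left this).symm⟩
  · rintro ⟨hB, hBA, hpw, hne, hL⟩
    refine ⟨⟨fun C hC => ?_, hpw⟩, ⟨hB, hne⟩, by rw [hL, union_sdiff_of_subset hBA]⟩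
    exact disjoint_sdiff.mono_right (hL ▸ subset_blocksUnion hC)

lemma isOrderedPartition_middle {A B : Finset ℕ} {L₁ L₂ : List (Finset ℕ)} :
    IsOrderedPartition A (L₁ ++ B :: L₂) ↔ IsOrderedPartition A (B :: (L₁ ++ L₂)) := by
  simp only [IsOrderedPartition, List.pairwise_middle (fun h => Disjoint.symm h),
    List.perm_middle.mem_iff, blocksUnion_middle, blocksUnion_cons]

/-- With `B = ∅` this adds the singleton block `{x}`. -/
lemma isOrderedPartition_insert_middle {A B : Finset ℕ} {x : ℕ} (hxA : x ∉ A) (hxB : x ∉ B)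
    (L₁ L₂ : List (Finset ℕ)) :
    IsOrderedPartition (insert x A) (L₁ ++ insert x B :: L₂) ↔
      B ⊆ A ∧ IsOrderedPartition (A \ B) (L₁ ++ L₂) := by
  have hdiff : insert x A \ insert x B = A \ B := by
    ext y; simp only [mem_sdiff, mem_insert]; grind
  rw [isOrderedPartition_middle, isOrderedPartition_cons, hdiff, insert_subset_insert_iff hxB]
  simp

section Weight

variable (α θ : ℝ)

open Classical in
/-- The blocks weighing `θ` are exactly those that the ordered CRP opened at the right end. -/
noncomputable def ocrpWeight : List (Finset ℕ) → ℝ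
  | [] => 1
  | B :: L => (if ∃ b ∈ B, ∀ x ∈ blocksUnion L, b ≤ x then θ else α) * ocrpWeight L

@[simp] lemma ocrpWeight_nil : ocrpWeight α θ [] = 1 := rfl

open Classical in
lemma ocrpWeight_cons (B : Finset ℕ) (L : List (Finset ℕ)) :
    ocrpWeight α θ (B :: L) =
      (if ∃ b ∈ B, ∀ x ∈ blocksUnion L, b ≤ x then θ else α) * ocrpWeight α θ L := rfl

variable {α θ}

lemma ocrpWeight_append_of_insert {L₁ L L' : List (Finset ℕ)} {m : ℕ} {r : ℝ}
    (h₁ : ∀ C ∈ L₁, ∀ b ∈ C, b ≤ m) (hU : blocksUnion L' = insert m (blocksUnion L))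
    (hw : ocrpWeight α θ L' = r * ocrpWeight α θ L) :
    ocrpWeight α θ (L₁ ++ L') = r * ocrpWeight α θ (L₁ ++ L) := by
  induction L₁ with
  | nil => exact hw
  | cons C L₁ ih =>
    have hC : ∀ b ∈ C, b ≤ m := h₁ C List.mem_cons_self
    simp only [List.cons_append, ocrpWeight_cons, blocksUnion_append, hU, union_insert,
      forall_mem_insert]
    rw [ih fun D hD => h₁ D (List.mem_cons_of_mem C hD)]
    have hcond : (∃ b ∈ C, b ≤ m ∧ ∀ x ∈ blocksUnion L₁ ∪ blocksUnion L, b ≤ x) ↔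
        ∃ b ∈ C, ∀ x ∈ blocksUnion L₁ ∪ blocksUnion L, b ≤ x :=
      exists_congr fun b => and_congr_right fun hb => and_iff_right (hC b hb)
    simp only [hcond]
    ring

lemma ocrpWeight_insert_cons {B : Finset ℕ} {L : List (Finset ℕ)} {m : ℕ} (hB : B.Nonempty)
    (hL : ∀ x ∈ blocksUnion L, x < m) :
    ocrpWeight α θ (insert m B :: L) = ocrpWeight α θ (B :: L) := by
  have hcond : (∃ b ∈ insert m B, ∀ x ∈ blocksUnion L, b ≤ x) ↔
      ∃ b ∈ B, ∀ x ∈ blocksUnion L, b ≤ x := by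
    rw [exists_mem_insert]
    refine or_iff_right_of_imp fun hm => ?_
    obtain ⟨b, hb⟩ := hB
    exact ⟨b, hb, fun x hx => absurd (hm x hx) (hL x hx).not_ge⟩
  simp only [ocrpWeight_cons, hcond]

lemma ocrpWeight_singleton_cons {L : List (Finset ℕ)} {m : ℕ}
    (hL : ∀ x ∈ blocksUnion L, x < m) (hne : ∀ C ∈ L, C.Nonempty) :
    ocrpWeight α θ ({m} :: L) = (if L = [] then θ else α) * ocrpWeight α θ L := by
  have hcond : (∃ b ∈ ({m} : Finset ℕ), ∀ x ∈ blocksUnion L, b ≤ x) ↔ L = [] := by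
    rcases L with _ | ⟨C, L⟩
    · simp
    · obtain ⟨x, hx⟩ := hne C List.mem_cons_self
      have hxL : x ∈ blocksUnion (C :: L) := subset_blocksUnion List.mem_cons_self hx
      simpa using fun h : ∀ y ∈ blocksUnion (C :: L), m ≤ y => (hL x hxL).not_ge (h x hxL)
  simp only [ocrpWeight_cons, hcond]

end Weight

open Classical in
noncomputable def ocrpFormula (α θ : ℝ) (n : ℕ) (P : List (Finset ℕ)) : ℝ :=
  if IsOrderedPartition (Icc 1 n) P then
    (P.map fun B => ∏ i ∈ range (#B - 1), ((i : ℝ) + 1 - α)).prod * ocrpWeight α θ P /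
      ∏ i ∈ range n, ((i : ℝ) + θ)
  else 0

section Formula

variable {α θ : ℝ} {n : ℕ}

lemma ocrpFormula_zero (P : List (Finset ℕ)) :
    ocrpFormula α θ 0 P = if P = [] then 1 else 0 := by
  rcases P with _ | ⟨B, L⟩
  · simp [ocrpFormula]
  · have : ¬ IsOrderedPartition (Icc 1 0) (B :: L) := fun h =>
      have ⟨hB, hB0, _⟩ := isOrderedPartition_cons.1 h
      hB.ne_empty (subset_empty.1 hB0)
    rw [ocrpFormula, if_neg this, if_neg (List.cons_ne_nil B L)]

lemma ocrpFormula_succ_singleton (L₁ L₂ : List (Finset ℕ)) :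
    ocrpFormula α θ (n + 1) (L₁ ++ {n + 1} :: L₂) =
      ocrpFormula α θ n (L₁ ++ L₂) * ((if L₂ = [] then θ else α) / ((n : ℝ) + θ)) := by
  have hvalid : IsOrderedPartition (Icc 1 (n + 1)) (L₁ ++ {n + 1} :: L₂) ↔
      IsOrderedPartition (Icc 1 n) (L₁ ++ L₂) := by
    rw [← insert_Icc_right_eq_Icc_add_one (by omega), ← insert_empty,
      isOrderedPartition_insert_middle (by simp) (notMem_empty _)]
    simp
  unfold ocrpFormula
  by_cases h : IsOrderedPartition (Icc 1 n) (L₁ ++ L₂)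
  · rw [if_pos (hvalid.2 h), if_pos h]
    have hL₂ : ∀ x ∈ blocksUnion L₂, x < n + 1 := fun x hx => by
      obtain ⟨C, hC, hxC⟩ := mem_blocksUnion.1 hx
      exact Nat.lt_succ_of_le (h.le_of_mem (List.mem_append_right _ hC) hxC)
    rw [ocrpWeight_append_of_insert
      (fun C hC b hb => (h.le_of_mem (List.mem_append_left _ hC) hb).trans n.le_succ)
      (by rw [blocksUnion_cons, insert_eq])
      (ocrpWeight_singleton_cons hL₂ fun C hC => h.2.1 C (List.mem_append_right _ hC))]
    simp only [List.map_append, List.map_cons, List.prod_append, List.prod_cons, card_singleton,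
      Nat.sub_self, range_zero, prod_empty, one_mul, prod_range_succ, ← div_div]
    ring
  · rw [if_neg (mt hvalid.1 h), if_neg h, zero_mul]

lemma ocrpFormula_succ_insert {B : Finset ℕ} (hB : B.Nonempty) (hnB : n + 1 ∉ B)
    (L₁ L₂ : List (Finset ℕ)) :
    ocrpFormula α θ (n + 1) (L₁ ++ insert (n + 1) B :: L₂) =
      ocrpFormula α θ n (L₁ ++ B :: L₂) * (((#B : ℝ) - α) / ((n : ℝ) + θ)) := by
  have hvalid : IsOrderedPartition (Icc 1 (n + 1)) (L₁ ++ insert (n + 1) B :: L₂) ↔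
      IsOrderedPartition (Icc 1 n) (L₁ ++ B :: L₂) := by
    rw [← insert_Icc_right_eq_Icc_add_one (by omega),
      isOrderedPartition_insert_middle (by simp) hnB, isOrderedPartition_middle,
      isOrderedPartition_cons]
    simp [hB]
  unfold ocrpFormula
  by_cases h : IsOrderedPartition (Icc 1 n) (L₁ ++ B :: L₂)
  · rw [if_pos (hvalid.2 h), if_pos h]
    have hL₂ : ∀ x ∈ blocksUnion L₂, x < n + 1 := fun x hx => by
      obtain ⟨C, hC, hxC⟩ := mem_blocksUnion.1 hx
      exact Nat.lt_succ_of_le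
        (h.le_of_mem (List.mem_append_right _ (List.mem_cons_of_mem B hC)) hxC)
    rw [ocrpWeight_append_of_insert (r := 1) (L := B :: L₂)
      (fun C hC b hb => (h.le_of_mem (List.mem_append_left _ hC) hb).trans n.le_succ)
      (by rw [blocksUnion_cons, blocksUnion_cons, insert_union])
      (by rw [one_mul]; exact ocrpWeight_insert_cons hB hL₂)]
    have hasc : ∏ i ∈ range (#(insert (n + 1) B) - 1), ((i : ℝ) + 1 - α) =
        (∏ i ∈ range (#B - 1), ((i : ℝ) + 1 - α)) * ((#B : ℝ) - α) := by
      obtain ⟨k, hk⟩ := Nat.exists_eq_add_of_lt (card_pos.2 hB)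
      rw [card_insert_of_notMem hnB, hk, Nat.add_sub_cancel, prod_range_succ]
      push_cast
      ring
    simp only [List.map_append, List.map_cons, List.prod_append, List.prod_cons, hasc,
      prod_range_succ, ← div_div]
    ring
  · rw [if_neg (mt hvalid.1 h), if_neg h, zero_mul]

/-- The `j`-th summand in the recursion defining `ocrpPartLaw α θ (n + 1) P`. -/
lemma ocrpFormula_succ_term (P : List (Finset ℕ)) {j : ℕ} (hj : j < P.length) :
    (if n + 1 ∈ P.getD j ∅ then
      (if P.getD j ∅ = {n + 1} then
        (if j + 1 = P.length then ocrpFormula α θ n (P.eraseIdx j) * (θ / ((n : ℝ) + θ))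
         else ocrpFormula α θ n (P.eraseIdx j) * (α / ((n : ℝ) + θ)))
      else
        ocrpFormula α θ n (P.set j (P.getD j ∅ \ {n + 1})) *
          ((((P.getD j ∅).card : ℝ) - 1 - α) / ((n : ℝ) + θ)))
    else 0) = if n + 1 ∈ P.getD j ∅ then ocrpFormula α θ (n + 1) P else 0 := by
  obtain ⟨L₁, B, L₂, rfl, rfl⟩ : ∃ L₁ B L₂, P = L₁ ++ B :: L₂ ∧ j = L₁.length :=
    ⟨P.take j, P[j], P.drop (j + 1), by simp, by simp; omega⟩
  have hB : (L₁ ++ B :: L₂).getD L₁.length ∅ = B := by simp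
  rw [hB, List.eraseIdx_append_of_length_le le_rfl, List.set_append_right _ _ le_rfl]
  simp only [Nat.sub_self, List.eraseIdx_cons_zero, List.set_cons_zero, List.length_append,
    List.length_cons]
  split_ifs with hmem hsing hlast
  · subst hsing
    rw [ocrpFormula_succ_singleton, if_pos (List.eq_nil_of_length_eq_zero (by omega))]
  · subst hsing
    rw [ocrpFormula_succ_singleton, if_neg fun h => hlast (by simp [h])]
  · have hB' : (B.erase (n + 1)).Nonempty := by
      rw [nonempty_iff_ne_empty, Ne, erase_eq_empty_iff]
      simp [hsing, ne_empty_of_mem hmem]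
    conv_rhs => rw [← insert_erase hmem]
    rw [ocrpFormula_succ_insert hB' (notMem_erase _ _), card_erase_of_mem hmem,
      sdiff_singleton_eq_erase, Nat.cast_sub (card_pos.2 ⟨_, hmem⟩)]
    ring
  · rfl

end Formula

theorem ocrpPartLaw_eq_ocrpFormula (α θ : ℝ) (n : ℕ) (P : List (Finset ℕ)) :
    ocrpPartLaw α θ n P = ocrpFormula α θ n P := by
  induction n generalizing P with
  | zero => rw [ocrpFormula_zero]; rfl
  | succ n ih =>
    rw [ocrpPartLaw]
    simp only [ih]
    rw [sum_congr rfl fun j hj => ocrpFormula_succ_term P (mem_range.1 hj)]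
    by_cases hP : IsOrderedPartition (Icc 1 (n + 1)) P
    · exact sum_ite_mem_getD hP.1 (hP.2.2 ▸ right_mem_Icc.2 (by omega)) _
    · simp [ocrpFormula, hP]

def orderedPartitions : List ℕ → Finset ℕ → Finset (List (Finset ℕ))
  | [], A => if A = ∅ then {[]} else ∅
  | m :: c, A =>
      (A.powersetCard m).biUnion fun S => (orderedPartitions c (A \ S)).image (S :: ·)

lemma mem_orderedPartitions {c : List ℕ} (hc : ∀ m ∈ c, 0 < m) {A : Finset ℕ}
    {P : List (Finset ℕ)} :
    P ∈ orderedPartitions c A ↔ P.map card = c ∧ IsOrderedPartition A P := by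
  induction c generalizing A P with
  | nil =>
    by_cases hA : A = ∅ <;> simp +contextual [orderedPartitions, hA]
  | cons m c ih =>
    rcases P with _ | ⟨B, Q⟩
    · simp [orderedPartitions]
    simp only [orderedPartitions, mem_biUnion, mem_image, mem_powersetCard, List.cons.injEq,
      List.map_cons, isOrderedPartition_cons, ih (List.forall_mem_cons.1 hc).2]
    constructor
    · rintro ⟨S, ⟨hSA, rfl⟩, Q', ⟨hmap, hQ'⟩, rfl, rfl⟩
      exact ⟨⟨rfl, hmap⟩, card_pos.1 (hc _ List.mem_cons_self), hSA, hQ'⟩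
    · rintro ⟨⟨rfl, hmap⟩, -, hBA, hQ⟩
      exact ⟨B, ⟨hBA, rfl⟩, Q, ⟨hmap, hQ⟩, rfl, rfl⟩

lemma sum_orderedPartitions_cons {M : Type*} [AddCommMonoid M] (f : List (Finset ℕ) → M)
    (m : ℕ) (c : List ℕ) (A : Finset ℕ) :
    ∑ P ∈ orderedPartitions (m :: c) A, f P =
      ∑ S ∈ A.powersetCard m, ∑ Q ∈ orderedPartitions c (A \ S), f (S :: Q) := by
  rw [orderedPartitions, sum_biUnion]
  · exact sum_congr rfl fun S _ => sum_image fun _ _ _ _ h => (List.cons.inj h).2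
  · intro S _ T _ hST
    simp only [Function.onFun, disjoint_left, mem_image]
    rintro _ ⟨Q, -, rfl⟩ ⟨Q', -, h⟩
    exact hST (List.cons.inj h).1.symm

section Sums

variable {α θ : ℝ}

lemma ocrpWeight_cons_of_isLeast {A S : Finset ℕ} {a : ℕ} (ha : IsLeast (A : Set ℕ) a)
    (hS : S ⊆ A) {Q : List (Finset ℕ)} (hQ : blocksUnion Q = A \ S) :
    ocrpWeight α θ (S :: Q) = (if a ∈ S then θ else α) * ocrpWeight α θ Q := by
  have hcond : (∃ b ∈ S, ∀ x ∈ blocksUnion Q, b ≤ x) ↔ a ∈ S := by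
    rw [hQ]
    constructor
    · rintro ⟨b, hb, hbA⟩
      by_contra haS
      have hba : b = a := le_antisymm (hbA a (mem_sdiff.2 ⟨ha.1, haS⟩)) (ha.2 (hS hb))
      exact haS (hba ▸ hb)
    · exact fun haS => ⟨a, haS, fun x hx => ha.2 (mem_sdiff.1 hx).1⟩
  simp only [ocrpWeight_cons, hcond]

lemma sum_filter_orderedPartitions_cons {m : ℕ} {c : List ℕ} (hc : ∀ x ∈ c, 0 < x)
    {A : Finset ℕ} {a : ℕ} (ha : IsLeast (A : Set ℕ) a) (p : List (Finset ℕ) → Prop)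
    [DecidablePred p] :
    ∑ P ∈ orderedPartitions (m :: c) A with p P, ocrpWeight α θ P =
      ∑ S ∈ A.powersetCard m, (if a ∈ S then θ else α) *
        ∑ Q ∈ orderedPartitions c (A \ S) with p (S :: Q), ocrpWeight α θ Q := by
  simp only [sum_filter]
  rw [sum_orderedPartitions_cons]
  refine sum_congr rfl fun S hS => ?_
  rw [mul_sum]
  refine sum_congr rfl fun Q hQ => ?_
  rw [ocrpWeight_cons_of_isLeast ha (mem_powersetCard.1 hS).1
    ((mem_orderedPartitions hc).1 hQ).2.2.2, mul_ite, mul_zero]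

lemma sum_tail_eq_card_sdiff {m : ℕ} {c : List ℕ} {A S : Finset ℕ} (hA : (m :: c).sum = #A)
    (hS : S ∈ A.powersetCard m) : c.sum = #(A \ S) := by
  obtain ⟨hSA, hSm⟩ := mem_powersetCard.1 hS
  rw [card_sdiff_of_subset hSA, hSm, ← hA, List.sum_cons, Nat.add_sub_cancel_left]

variable (α θ) in
noncomputable def compositionWeight : List ℕ → ℝ
  | [] => 1
  | m :: c => (((m + c.sum - 1).choose (m - 1) : ℝ) * θ + ((m + c.sum - 1).choose m : ℝ) * α) *
      compositionWeight c

lemma sum_ocrpWeight_orderedPartitions {c : List ℕ} (hc : ∀ m ∈ c, 0 < m) {A : Finset ℕ}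
    (hA : c.sum = #A) :
    ∑ P ∈ orderedPartitions c A, ocrpWeight α θ P = compositionWeight α θ c := by
  induction c generalizing A with
  | nil =>
    obtain rfl : A = ∅ := card_eq_zero.1 (by simpa using hA.symm)
    simp [orderedPartitions, compositionWeight]
  | cons m c ih =>
    obtain ⟨hm, hc'⟩ := List.forall_mem_cons.1 hc
    have hA' : A.Nonempty := card_pos.1 (by simp at hA; omega)
    have h := sum_filter_orderedPartitions_cons (α := α) (θ := θ) (m := m) hc'
      (isLeast_min' A hA') fun _ => True
    simp only [filter_true] at h
    rw [h, sum_congr rfl fun S hS => by rw [ih hc' (sum_tail_eq_card_sdiff hA hS)],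
      ← sum_mul, sum_powersetCard_ite_mem (min'_mem A hA') hm, ← hA]
    simp [compositionWeight, nsmul_eq_mul]

lemma switchProb_cons_succ (m : ℕ) (c : List ℕ) (j : ℕ) :
    switchProb α θ (m :: c) (j + 1) = switchProb α θ c j := by
  simp [switchProb]

lemma compositionWeight_cons_mul_switchProb_zero (hα : 0 ≤ α) (hθ : 0 < θ) {m : ℕ} (hm : 0 < m)
    (c : List ℕ) :
    compositionWeight α θ (m :: c) * switchProb α θ (m :: c) 0 =
      ((m + c.sum - 1).choose (m - 1) : ℝ) * θ * compositionWeight α θ c := by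
  have hden : (m : ℝ) * θ + c.sum * α ≠ 0 := by
    have : (0 : ℝ) < m := by exact_mod_cast hm
    exact (add_pos_of_pos_of_nonneg (mul_pos this hθ) (by positivity)).ne'
  have key : ((m + c.sum - 1).choose (m - 1) : ℝ) * c.sum =
      ((m + c.sum - 1).choose m : ℝ) * m := by
    exact_mod_cast choose_pred_mul_eq_choose_mul hm c.sum
  simp only [compositionWeight, switchProb, List.getD_cons_zero, List.drop_succ_cons,
    List.drop_zero]
  field_simp
  linear_combination -α * compositionWeight α θ c * key

lemma compositionWeight_cons_mul_one_sub_switchProb_zero (hα : 0 ≤ α) (hθ : 0 < θ) {m : ℕ}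
    (hm : 0 < m) (c : List ℕ) :
    compositionWeight α θ (m :: c) * (1 - switchProb α θ (m :: c) 0) =
      ((m + c.sum - 1).choose m : ℝ) * α * compositionWeight α θ c := by
  rw [mul_one_sub, compositionWeight_cons_mul_switchProb_zero hα hθ hm, compositionWeight]
  ring

lemma sum_ocrpWeight_orderedPartitions_filter_head (hα : 0 ≤ α) (hθ : 0 < θ) {m : ℕ}
    {c : List ℕ} (hc : ∀ x ∈ m :: c, 0 < x) {A : Finset ℕ} (hA : (m :: c).sum = #A) {a : ℕ}
    (ha : IsLeast (A : Set ℕ) a) :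
    ∑ P ∈ orderedPartitions (m :: c) A with a ∈ P.getD 0 ∅, ocrpWeight α θ P =
      compositionWeight α θ (m :: c) * switchProb α θ (m :: c) 0 := by
  obtain ⟨hm, hc'⟩ := List.forall_mem_cons.1 hc
  have hinner : ∀ S ∈ A.powersetCard m, (if a ∈ S then θ else α) *
      ∑ Q ∈ orderedPartitions c (A \ S) with a ∈ (S :: Q).getD 0 ∅, ocrpWeight α θ Q =
      if a ∈ S then θ * compositionWeight α θ c else 0 := fun S hS => by
    simp only [List.getD_cons_zero]
    split_ifs with haS
    · rw [filter_true_of_mem fun _ _ => haS,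
        sum_ocrpWeight_orderedPartitions hc' (sum_tail_eq_card_sdiff hA hS)]
    · rw [filter_false_of_mem fun _ _ => haS, sum_empty, mul_zero]
  rw [sum_filter_orderedPartitions_cons hc' ha, sum_congr rfl hinner,
    sum_powersetCard_ite_mem ha.1 hm, compositionWeight_cons_mul_switchProb_zero hα hθ hm, ← hA]
  simp [nsmul_eq_mul, mul_assoc]

lemma sum_ocrpWeight_orderedPartitions_filter (hα : 0 ≤ α) (hθ : 0 < θ) {c : List ℕ}
    (hc : ∀ m ∈ c, 0 < m) {A : Finset ℕ} (hA : c.sum = #A) {a : ℕ} (ha : IsLeast (A : Set ℕ) a)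
    {k : ℕ} (hk : k < c.length) :
    ∑ P ∈ orderedPartitions c A with a ∈ P.getD k ∅, ocrpWeight α θ P =
      compositionWeight α θ c * (switchProb α θ c k * ∏ j ∈ range k, (1 - switchProb α θ c j)) := by
  induction k generalizing c A a with
  | zero =>
    obtain ⟨m, c, rfl⟩ := List.exists_cons_of_length_pos hk
    rw [sum_ocrpWeight_orderedPartitions_filter_head hα hθ hc hA ha, prod_range_zero, mul_one]
  | succ k ih =>
    obtain ⟨m, c, rfl⟩ := List.exists_cons_of_length_pos (by omega : 0 < c.length)
    obtain ⟨hm, hc'⟩ := List.forall_mem_cons.1 hc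
    have hinner : ∀ S ∈ A.powersetCard m, (if a ∈ S then θ else α) *
        ∑ Q ∈ orderedPartitions c (A \ S) with a ∈ (S :: Q).getD (k + 1) ∅, ocrpWeight α θ Q =
        if a ∈ S then 0 else α * (compositionWeight α θ c *
          (switchProb α θ c k * ∏ j ∈ range k, (1 - switchProb α θ c j))) := fun S hS => by
      simp only [List.getD_cons_succ]
      split_ifs with haS
      · rw [filter_false_of_mem, sum_empty, mul_zero]
        intro Q hQ haQ
        have := ((mem_orderedPartitions hc').1 hQ).2.2.2 ▸ getD_subset_blocksUnion Q k haQ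
        exact (mem_sdiff.1 this).2 haS
      · rw [ih hc' (sum_tail_eq_card_sdiff hA hS)
          ⟨mem_sdiff.2 ⟨ha.1, haS⟩, fun x hx => ha.2 (mem_sdiff.1 hx).1⟩ (by simpa using hk)]
    rw [sum_filter_orderedPartitions_cons hc' ha, sum_congr rfl hinner,
      sum_powersetCard_ite_mem ha.1 hm, prod_range_succ']
    simp only [switchProb_cons_succ, ← hA, smul_zero, nsmul_eq_mul, List.sum_cons]
    linear_combination -(switchProb α θ c k * ∏ j ∈ range k, (1 - switchProb α θ c j)) *
      compositionWeight_cons_mul_one_sub_switchProb_zero hα hθ hm c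

end Sums

lemma tsum_ocrpPartLaw_eq {c : List ℕ} (hc : ∀ m ∈ c, 0 < m) (α θ : ℝ) (n : ℕ)
    (q : List (Finset ℕ) → Prop) [DecidablePred q] (hq : ∀ P, q P → P.map card = c) :
    ∑' P : {P // q P}, ocrpPartLaw α θ n P =
      (c.map fun m => ∏ i ∈ range (m - 1), ((i : ℝ) + 1 - α)).prod /
        (∏ i ∈ range n, ((i : ℝ) + θ)) *
        ∑ P ∈ orderedPartitions c (Icc 1 n) with q P, ocrpWeight α θ P := by
  rw [tsum_subtype_eq_sum_filter q _ (orderedPartitions c (Icc 1 n)), mul_sum]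
  · refine sum_congr rfl fun P hP => ?_
    obtain ⟨rfl, hPA⟩ := (mem_orderedPartitions hc).1 (mem_filter.1 hP).1
    rw [ocrpPartLaw_eq_ocrpFormula, ocrpFormula, if_pos hPA, List.map_map, div_mul_eq_mul_div]
    rfl
  · intro P hqP hP
    rw [ocrpPartLaw_eq_ocrpFormula, ocrpFormula,
      if_neg fun h => hP ((mem_orderedPartitions hc).2 ⟨hq P hqP, h⟩)]

end OrderedCRP

open OrderedCRP

theorem ocrpPart_find_one_general (α θ : ℝ) (hα0 : 0 < α) (hθ : 0 < θ)
    (n : ℕ) (hn : 1 ≤ n) (c : List ℕ) (hpos : ∀ x ∈ c, 0 < x) (hsum : c.sum = n)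
    (k : ℕ) (hk : k < c.length) :
    (∑' P : {P : List (Finset ℕ) // P.map Finset.card = c ∧ 1 ∈ P.getD k ∅},
        ocrpPartLaw α θ n P.val)
      = (∑' P : {P : List (Finset ℕ) // P.map Finset.card = c}, ocrpPartLaw α θ n P.val)
        * (switchProb α θ c k * ∏ j ∈ Finset.range k, (1 - switchProb α θ c j)) := by
  have hA : c.sum = #(Icc 1 n) := by simp [hsum]
  have h1 : IsLeast ((Icc 1 n : Finset ℕ) : Set ℕ) 1 := by
    rw [coe_Icc]
    exact isLeast_Icc hn
  have hsizes : ∀ P ∈ orderedPartitions c (Icc 1 n), P.map card = c := fun P hP =>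
    ((mem_orderedPartitions hpos).1 hP).1
  rw [tsum_ocrpPartLaw_eq hpos α θ n _ fun P hP => hP.1,
    tsum_ocrpPartLaw_eq hpos α θ n _ fun P hP => hP, filter_true_of_mem hsizes,
    filter_congr fun P hP => and_iff_right (hsizes P hP),
    sum_ocrpWeight_orderedPartitions hpos hA,
    sum_ocrpWeight_orderedPartitions_filter hα0.le hθ hpos hA h1 hk]
  ring

/-- given that the list of block sizes of `Π̃_n` equals the composition
`(n₁,…,n_ℓ)`, the conditional probability that `1` lies in the `k`-th block equals
`p_k ∏_{j<k} (1 − p_j)` (with `k` 0-indexed): equivalently,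
`P(sizes = c and 1 ∈ block k) = P(sizes = c) · p_k ∏_{j<k}(1 − p_j)`. -/
theorem ocrpPart_find_one (α θ : ℝ) (hα0 : 0 < α) (hα1 : α < 1) (hθ : 0 < θ)
    (n : ℕ) (hn : 1 ≤ n) (c : List ℕ) (hpos : ∀ x ∈ c, 0 < x) (hsum : c.sum = n)
    (k : ℕ) (hk : k < c.length) :
    (∑' P : {P : List (Finset ℕ) // P.map Finset.card = c ∧ 1 ∈ P.getD k ∅},
        ocrpPartLaw α θ n P.val)
      = (∑' P : {P : List (Finset ℕ) // P.map Finset.card = c}, ocrpPartLaw α θ n P.val)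
        * (switchProb α θ c k * ∏ j ∈ Finset.range k, (1 - switchProb α θ c j)) :=
  ocrpPart_find_one_general α θ hα0 hθ n hn c hpos hsum k hk
end

section
/- For every real 0 < α < 1 and all integers n ≥ 2 and 1 ≤ m ≤ n−1, the symmetrized splitting rules for θ = 1−α and θ = 2−α coincide: q^X(m, n−m) + q^X(n−m, m) = q^F(m, n−m) + q^F(n−m, m), where q^F(m, n−m) = C(n−1, m) · ((m + (n−1−2m)α)/(n−1)) · Γ(m−α)Γ(n−m−α)/(Γ(1−α)Γ(n−α)) and q^X(m, n−m) = C(n−1, m) · ((2m + (n−1−2m)α)/(n−1)) · Γ(m−α)Γ(n−m+1−α)/(Γ(1−α)Γ(n+1−α)); here C(a,b) is the binomial coefficient and Γ is the real Gamma function. -/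
/-!
Using `Γ(x + 1) = x Γ(x)`, the defect `q^X(m, n−m) − q^F(m, n−m)` factors as `(1 − α)(n − 2m) w(m)`,
where `w(m)` is invariant under `m ↦ n − m` because `C(n−1, m) m = C(n−1, n−m) (n−m)`.
The factor `n − 2m` changes sign under `m ↦ n − m`, so the two defects cancel in the symmetrized sum.
-/

/-- Ford's splitting rule `q^F(m, n−m) = q_{α,1−α}(n−1, m)`:
`q^F(m, n−m) = C(n−1, m) · ((m + (n−1−2m)α)/(n−1)) · Γ(m−α)Γ(n−m−α)/(Γ(1−α)Γ(n−α))`. -/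
noncomputable def qFord (α : ℝ) (n m : ℕ) : ℝ :=
  ((n - 1).choose m : ℝ) * (((m : ℝ) + ((n : ℝ) - 1 - 2 * m) * α) / ((n : ℝ) - 1)) *
    (Real.Gamma ((m : ℝ) - α) * Real.Gamma ((n : ℝ) - m - α) /
      (Real.Gamma (1 - α) * Real.Gamma ((n : ℝ) - α)))

/-- The splitting rule `q^X(m, n−m) = q_{α,2−α}(n−1, m)`:
`q^X(m, n−m) = C(n−1, m) · ((2m + (n−1−2m)α)/(n−1)) · Γ(m−α)Γ(n−m+1−α)/(Γ(1−α)Γ(n+1−α))`. -/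
noncomputable def qX (α : ℝ) (n m : ℕ) : ℝ :=
  ((n - 1).choose m : ℝ) * ((2 * (m : ℝ) + ((n : ℝ) - 1 - 2 * m) * α) / ((n : ℝ) - 1)) *
    (Real.Gamma ((m : ℝ) - α) * Real.Gamma ((n : ℝ) - m + 1 - α) /
      (Real.Gamma (1 - α) * Real.Gamma ((n : ℝ) + 1 - α)))

theorem Nat.choose_pred_sub_mul_sub {n m : ℕ} (h : m ≤ n) :
    (n - 1).choose (n - m) * (n - m) = (n - 1).choose m * m := by
  obtain ⟨b, rfl⟩ := Nat.exists_eq_add_of_le h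
  rw [Nat.add_sub_cancel_left]
  cases b with
  | zero => cases m <;> simp
  | succ b =>
    rw [show m + (b + 1) - 1 = m + b by omega, Nat.choose_succ_right_eq, Nat.add_sub_cancel,
      Nat.choose_symm_add]

noncomputable def defectWeight (α : ℝ) (n m : ℕ) : ℝ :=
  ((n - 1).choose m * m : ℝ) * Real.Gamma ((m : ℝ) - α) * Real.Gamma ((n : ℝ) - m - α) /
    (((n : ℝ) - 1) * ((n : ℝ) - α) * Real.Gamma (1 - α) * Real.Gamma ((n : ℝ) - α))

theorem defectWeight_sub {α : ℝ} {n m : ℕ} (h : m ≤ n) :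
    defectWeight α n (n - m) = defectWeight α n m := by
  have hchoose : ((n - 1).choose (n - m) * (n - m : ℕ) : ℝ) = (n - 1).choose m * m := by
    exact_mod_cast Nat.choose_pred_sub_mul_sub h
  unfold defectWeight
  rw [hchoose, Nat.cast_sub h, sub_sub_cancel]
  ring

theorem qX_sub_qFord {α : ℝ} {n m : ℕ} (hα : α < 1) (hm : m < n) :
    qX α n m - qFord α n m = (1 - α) * ((n : ℝ) - 2 * m) * defectWeight α n m := by
  have hmn : (m : ℝ) + 1 ≤ n := by exact_mod_cast hm
  rw [qX, qFord, defectWeight, show (n : ℝ) - m + 1 - α = (n - m - α) + 1 by ring,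
    show (n : ℝ) + 1 - α = (n - α) + 1 by ring, Real.Gamma_add_one (by linarith),
    Real.Gamma_add_one (by linarith)]
  have hnα : (n : ℝ) - α ≠ 0 := by linarith
  field_simp
  ring

theorem symmetrized_splitting_rules_coincide_general (α : ℝ) (hα1 : α < 1)
    (n m : ℕ) (hm1 : 1 ≤ m) (hm2 : m ≤ n - 1) :
    qX α n m + qX α n (n - m) = qFord α n m + qFord α n (n - m) := by
  have hmn : m ≤ n := by omega
  rw [← sub_eq_zero, add_sub_add_comm, qX_sub_qFord hα1 (by omega),
    qX_sub_qFord hα1 (by omega), defectWeight_sub hmn, Nat.cast_sub hmn]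
  ring

/-- the symmetrized splitting rules for `θ = 1−α` and `θ = 2−α` coincide:
`q^X(m, n−m) + q^X(n−m, m) = q^F(m, n−m) + q^F(n−m, m)`. -/
theorem symmetrized_splitting_rules_coincide (α : ℝ) (hα0 : 0 < α) (hα1 : α < 1)
    (n m : ℕ) (hn : 2 ≤ n) (hm1 : 1 ≤ m) (hm2 : m ≤ n - 1) :
    qX α n m + qX α n (n - m) = qFord α n m + qFord α n (n - m) :=
  symmetrized_splitting_rules_coincide_general α hα1 n m hm1 hm2
end

section
/- For all real 0 < α < 1, θ > 0 and s > 0, the Laplace exponent of the (α, θ) spinal subordinator is given by ∫₀^∞ (1 − e^{−sx}) · ( α(1 − e^{−x})^{−α−1} e^{−(θ+1)x} + θ e^{−θx} (1 − e^{−x})^{−α} ) dx = s · Γ(s+θ) Γ(1−α) / Γ(s+θ+1−α), where Γ is the real Gamma function; in particular the integral converges. -/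
/-!
The density is `λ_{α,θ} = -g'` for the tail `g(x) = e^{-θx} (1 - e^{-x})^{-α}` of the Lévy
measure. Integrating by parts, `∫₀^∞ (1 - e^{-sx}) λ_{α,θ}(x) dx = ∫₀^∞ s e^{-sx} g(x) dx`: the
boundary terms vanish because `1 - e^{-sx} = O(1 - e^{-x})` at `0` and `g` decays at `∞`. The
substitution `u = e^{-x}` turns the last integral into `s · B(s + θ, 1 - α)`.
-/

open MeasureTheory Set Filter Topology Real ProbabilityTheory

theorem integrableOn_and_integral_rpow_mul_one_sub_rpow {a b : ℝ} (ha : 0 < a) (hb : 0 < b) :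
    IntegrableOn (fun u : ℝ => u ^ (a - 1) * (1 - u) ^ (b - 1)) (Ioo 0 1) ∧
      ∫ u in Ioo (0 : ℝ) 1, u ^ (a - 1) * (1 - u) ^ (b - 1) = beta a b := by
  set density : ℝ → ℝ := fun u => 1 / beta a b * (u ^ (a - 1) * (1 - u) ^ (b - 1))
  have h_nonneg : 0 ≤ᵐ[volume.restrict (Ioo 0 1)] density :=
    ae_restrict_of_forall_mem measurableSet_Ioo fun u hu =>
      mul_nonneg (one_div_nonneg.2 (beta_pos ha hb).le)
        (mul_nonneg (rpow_nonneg hu.1.le _) (rpow_nonneg (sub_nonneg.2 hu.2.le) _))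
  have h_meas : AEStronglyMeasurable density (volume.restrict (Ioo 0 1)) :=
    (by fun_prop : Measurable density).aestronglyMeasurable
  have h_lint : ∫⁻ u in Ioo 0 1, ENNReal.ofReal (density u) = 1 := by
    simp only [density, ← mul_assoc]
    rw [← lintegral_betaPDF, lintegral_betaPDF_eq_one ha hb]
  have h_int : IntegrableOn density (Ioo 0 1) :=
    (lintegral_ofReal_ne_top_iff_integrable h_meas h_nonneg).1 (by simp [h_lint])
  have h_val : ∫ u in Ioo 0 1, density u = 1 := by
    rw [integral_eq_lintegral_of_nonneg_ae h_nonneg h_meas, h_lint, ENNReal.toReal_one]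
  have h_eq : (fun u : ℝ => u ^ (a - 1) * (1 - u) ^ (b - 1)) = fun u => beta a b * density u := by
    funext u
    simp only [density]
    field_simp [(beta_pos ha hb).ne']
  rw [h_eq]
  exact ⟨h_int.const_mul _, by rw [integral_const_mul, h_val, mul_one]⟩

theorem image_exp_neg_Ioi_zero : (fun x : ℝ => exp (-x)) '' Ioi 0 = Ioo 0 1 := by
  rw [show (fun x : ℝ => exp (-x)) = exp ∘ Neg.neg from rfl, image_comp, image_neg_Ioi,
    neg_zero, image_exp_Iio, exp_zero]

theorem integrableOn_and_integral_exp_mul_one_sub_exp_rpow {b c : ℝ} (hb : 0 < b) (hc : 0 < c) :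
    IntegrableOn (fun x : ℝ => exp (-b * x) * (1 - exp (-x)) ^ (c - 1)) (Ioi 0) ∧
      ∫ x in Ioi (0 : ℝ), exp (-b * x) * (1 - exp (-x)) ^ (c - 1) = beta b c := by
  obtain ⟨h_int, h_val⟩ := integrableOn_and_integral_rpow_mul_one_sub_rpow hb hc
  have h_deriv : ∀ x ∈ Ioi (0 : ℝ),
      HasDerivWithinAt (fun x : ℝ => exp (-x)) (-exp (-x)) (Ioi 0) x := fun x _ =>
    (hasDerivAt_neg x).exp.hasDerivWithinAt.congr_deriv (by ring)
  have h_inj : InjOn (fun x : ℝ => exp (-x)) (Ioi 0) := fun _ _ _ _ h =>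
    neg_injective (exp_injective h)
  have h_jac : ∀ x : ℝ, |-exp (-x)| • (exp (-x) ^ (b - 1) * (1 - exp (-x)) ^ (c - 1))
      = exp (-b * x) * (1 - exp (-x)) ^ (c - 1) := fun x => by
    rw [abs_neg, abs_of_pos (exp_pos _), smul_eq_mul, ← exp_mul, ← mul_assoc, ← exp_add]
    ring_nf
  have h_iff := integrableOn_image_iff_integrableOn_abs_deriv_smul measurableSet_Ioi h_deriv h_inj
    (fun u : ℝ => u ^ (b - 1) * (1 - u) ^ (c - 1))
  have h_eq := integral_image_eq_integral_abs_deriv_smul measurableSet_Ioi h_deriv h_inj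
    (fun u : ℝ => u ^ (b - 1) * (1 - u) ^ (c - 1))
  simp only [image_exp_neg_Ioi_zero, h_jac] at h_iff h_eq
  exact ⟨h_iff.1 h_int, h_eq ▸ h_val⟩

theorem one_sub_exp_neg_pos {x : ℝ} (hx : 0 < x) : 0 < 1 - exp (-x) :=
  sub_pos.2 (exp_lt_one_iff.2 (neg_lt_zero.2 hx))

theorem one_sub_exp_neg_nonneg {x : ℝ} (hx : 0 ≤ x) : 0 ≤ 1 - exp (-x) :=
  sub_nonneg.2 (exp_le_one_iff.2 (neg_nonpos.2 hx))

theorem tendsto_exp_neg_mul_atTop {c : ℝ} (hc : 0 < c) :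
    Tendsto (fun x => exp (-c * x)) atTop (𝓝 0) :=
  tendsto_exp_atBot.comp (tendsto_id.const_mul_atTop_of_neg (neg_lt_zero.2 hc))

theorem one_sub_exp_neg_mul_le (s : ℝ) {x : ℝ} (hx : 0 ≤ x) :
    1 - exp (-s * x) ≤ max s 1 * (1 - exp (-x)) := by
  have h_pow : exp (-s * x) = exp (-x) ^ s := by rw [← exp_mul]; ring_nf
  have hy0 : 0 < exp (-x) := exp_pos _
  have hy1 : exp (-x) ≤ 1 := sub_nonneg.1 (one_sub_exp_neg_nonneg hx)
  rw [h_pow]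
  rcases le_total s 1 with hs | hs
  · have : exp (-x) ≤ exp (-x) ^ s := by
      simpa using rpow_le_rpow_of_exponent_ge hy0 hy1 hs
    rw [max_eq_right hs]
    linarith
  · have := one_add_mul_self_le_rpow_one_add (s := exp (-x) - 1) (by linarith) hs
    rw [add_sub_cancel] at this
    rw [max_eq_left hs]
    linarith

noncomputable def levyDensity (α θ x : ℝ) : ℝ :=
  α * (1 - exp (-x)) ^ (-α - 1) * exp (-(θ + 1) * x)
    + θ * exp (-θ * x) * (1 - exp (-x)) ^ (-α)

noncomputable def levyTail (α θ x : ℝ) : ℝ :=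
  exp (-θ * x) * (1 - exp (-x)) ^ (-α)

theorem hasDerivAt_levyTail (α θ : ℝ) {x : ℝ} (hx : 0 < x) :
    HasDerivAt (levyTail α θ) (-levyDensity α θ x) x := by
  have h_base : HasDerivAt (fun y => 1 - exp (-y)) (exp (-x)) x :=
    ((hasDerivAt_neg x).exp.const_sub 1).congr_deriv (by ring)
  have h_exp : HasDerivAt (fun y => exp (-θ * y)) (-θ * exp (-θ * x)) x :=
    ((hasDerivAt_id x).const_mul (-θ)).exp.congr_deriv (by simp [mul_comm])
  have h := h_exp.mul (h_base.rpow_const (p := -α) (Or.inl (one_sub_exp_neg_pos hx).ne'))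
  refine h.congr_deriv ?_
  have : exp (-(θ + 1) * x) = exp (-θ * x) * exp (-x) := by rw [← exp_add]; ring_nf
  rw [levyDensity, this]
  ring

theorem levyDensity_nonneg {α θ x : ℝ} (hα : 0 ≤ α) (hθ : 0 ≤ θ) (hx : 0 ≤ x) :
    0 ≤ levyDensity α θ x := by
  have h := one_sub_exp_neg_nonneg hx
  unfold levyDensity
  have := rpow_nonneg h (-α - 1)
  have := rpow_nonneg h (-α)
  positivity

theorem levyTail_nonneg (α θ : ℝ) {x : ℝ} (hx : 0 ≤ x) : 0 ≤ levyTail α θ x :=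
  mul_nonneg (exp_nonneg _) (rpow_nonneg (one_sub_exp_neg_nonneg hx) _)

theorem one_sub_exp_neg_mul_levyDensity (α θ : ℝ) {x : ℝ} (hx : 0 < x) :
    (1 - exp (-x)) * levyDensity α θ x =
      α * (exp (-(θ + 1) * x) * (1 - exp (-x)) ^ ((1 - α) - 1))
        + θ * (exp (-θ * x) * (1 - exp (-x)) ^ ((2 - α) - 1)) := by
  have h := (one_sub_exp_neg_pos hx).ne'
  rw [levyDensity, show (1 - α) - 1 = -α - 1 + 1 by ring, show (2 - α) - 1 = -α + 1 by ring,
    rpow_add_one h, rpow_add_one h]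
  ring

theorem one_sub_exp_neg_mul_levyTail (α θ : ℝ) {x : ℝ} (hx : 0 < x) :
    (1 - exp (-x)) * levyTail α θ x = exp (-θ * x) * (1 - exp (-x)) ^ (1 - α) := by
  rw [levyTail, show 1 - α = -α + 1 by ring, rpow_add_one (one_sub_exp_neg_pos hx).ne']
  ring

theorem integrableOn_one_sub_exp_mul_levyDensity {α θ s : ℝ} (hα0 : 0 < α) (hα1 : α < 1)
    (hθ : 0 < θ) (hs : 0 ≤ s) :
    IntegrableOn (fun x => (1 - exp (-s * x)) * levyDensity α θ x) (Ioi 0) := by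
  have h_dom :
      IntegrableOn (fun x => max s 1 * ((1 - exp (-x)) * levyDensity α θ x)) (Ioi 0) := by
    refine (IntegrableOn.congr_fun ?_ (fun x hx => (one_sub_exp_neg_mul_levyDensity α θ hx).symm)
      measurableSet_Ioi).const_mul _
    have h₁ := (integrableOn_and_integral_exp_mul_one_sub_exp_rpow (b := θ + 1) (c := 1 - α)
      (by linarith) (by linarith)).1
    have h₂ := (integrableOn_and_integral_exp_mul_one_sub_exp_rpow (c := 2 - α) hθ
      (by linarith)).1
    exact (h₁.const_mul α).add (h₂.const_mul θ)
  refine h_dom.mono' (Measurable.aestronglyMeasurable (by unfold levyDensity; fun_prop)) ?_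
  refine (ae_restrict_iff' measurableSet_Ioi).2 (Eventually.of_forall fun x (hx : 0 < x) => ?_)
  have h_density := levyDensity_nonneg hα0.le hθ.le hx.le
  have h_u : 0 ≤ 1 - exp (-s * x) := by simpa using one_sub_exp_neg_nonneg (mul_nonneg hs hx.le)
  rw [norm_of_nonneg (mul_nonneg h_u h_density), ← mul_assoc]
  exact mul_le_mul_of_nonneg_right (one_sub_exp_neg_mul_le s hx.le) h_density

theorem tendsto_levyTail_atTop (α : ℝ) {θ : ℝ} (hθ : 0 < θ) :
    Tendsto (levyTail α θ) atTop (𝓝 0) := by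
  have h := (tendsto_const_nhds.sub tendsto_exp_neg_atTop_nhds_zero).rpow_const
    (p := -α) (Or.inl (by norm_num : (1 : ℝ) - 0 ≠ 0))
  show Tendsto (fun x => exp (-θ * x) * (1 - exp (-x)) ^ (-α)) atTop (𝓝 0)
  simpa using (tendsto_exp_neg_mul_atTop hθ).mul h

theorem tendsto_one_sub_exp_mul_levyTail_nhdsGT_zero {α θ s : ℝ} (hα1 : α < 1)
    (hs : 0 ≤ s) :
    Tendsto (fun x => (1 - exp (-s * x)) * levyTail α θ x) (𝓝[>] 0) (𝓝 0) := by
  have h_bound : Tendsto (fun x => max s 1 * (exp (-θ * x) * (1 - exp (-x)) ^ (1 - α)))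
      (𝓝[>] 0) (𝓝 0) := by
    have h_cont : Continuous fun x : ℝ => max s 1 * (exp (-θ * x) * (1 - exp (-x)) ^ (1 - α)) :=
      by fun_prop (disch := linarith)
    simpa [zero_rpow (by linarith : 1 - α ≠ 0)] using
      (h_cont.tendsto 0).mono_left nhdsWithin_le_nhds
  refine squeeze_zero' ?_ ?_ h_bound <;> filter_upwards [self_mem_nhdsWithin] with x (hx : 0 < x)
  · have h_u : 0 ≤ 1 - exp (-s * x) := by
      simpa using one_sub_exp_neg_nonneg (mul_nonneg hs hx.le)
    exact mul_nonneg h_u (levyTail_nonneg α θ hx.le)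
  · rw [← one_sub_exp_neg_mul_levyTail α θ hx, ← mul_assoc]
    exact mul_le_mul_of_nonneg_right (one_sub_exp_neg_mul_le s hx.le) (levyTail_nonneg α θ hx.le)

theorem integrableOn_and_integral_exp_mul_levyTail {α θ s : ℝ} (hα1 : α < 1)
    (hsθ : 0 < s + θ) :
    IntegrableOn (fun x => exp (-s * x) * levyTail α θ x) (Ioi 0) ∧
      ∫ x in Ioi (0 : ℝ), exp (-s * x) * levyTail α θ x = beta (s + θ) (1 - α) := by
  have h_eq : (fun x => exp (-s * x) * levyTail α θ x)
      = fun x => exp (-(s + θ) * x) * (1 - exp (-x)) ^ ((1 - α) - 1) := by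
    funext x
    rw [levyTail, sub_sub_cancel_left, ← mul_assoc, ← exp_add]
    ring_nf
  rw [h_eq]
  exact integrableOn_and_integral_exp_mul_one_sub_exp_rpow hsθ (by linarith)

/-- the Laplace exponent of the `(α, θ)` spinal subordinator:
`∫₀^∞ (1 − e^{−sx}) λ_{α,θ}(x) dx = s Γ(s+θ) Γ(1−α) / Γ(s+θ+1−α)`, where
`λ_{α,θ}(x) = α(1 − e^{−x})^{−α−1} e^{−(θ+1)x} + θ e^{−θx} (1 − e^{−x})^{−α}`;
in particular the integral converges. -/
theorem laplace_exponent_alpha_theta (α θ s : ℝ) (hα0 : 0 < α) (hα1 : α < 1)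
    (hθ : 0 < θ) (hs : 0 < s) :
    IntegrableOn (fun x : ℝ => (1 - Real.exp (-s * x)) *
        (α * (1 - Real.exp (-x)) ^ (-α - 1) * Real.exp (-(θ + 1) * x)
          + θ * Real.exp (-θ * x) * (1 - Real.exp (-x)) ^ (-α))) (Set.Ioi 0)
      ∧ ∫ x in Set.Ioi (0 : ℝ), (1 - Real.exp (-s * x)) *
          (α * (1 - Real.exp (-x)) ^ (-α - 1) * Real.exp (-(θ + 1) * x)
            + θ * Real.exp (-θ * x) * (1 - Real.exp (-x)) ^ (-α))
        = s * Real.Gamma (s + θ) * Real.Gamma (1 - α) / Real.Gamma (s + θ + 1 - α) := by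
  have h_int := integrableOn_one_sub_exp_mul_levyDensity hα0 hα1 hθ hs.le
  obtain ⟨h_tail_int, h_tail⟩ :=
    integrableOn_and_integral_exp_mul_levyTail hα1 (add_pos hs hθ)
  refine ⟨h_int, ?_⟩
  have h_u : ∀ x ∈ Ioi (0 : ℝ), HasDerivAt (fun y => 1 - exp (-s * y)) (s * exp (-s * x)) x :=
    fun x _ => (((hasDerivAt_id x).const_mul (-s)).exp.const_sub 1).congr_deriv (by simp only [id]; ring)
  have h_top : Tendsto (fun x => (1 - exp (-s * x)) * levyTail α θ x) atTop (𝓝 0) := by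
    simpa using ((tendsto_exp_neg_mul_atTop hs).const_sub 1).mul (tendsto_levyTail_atTop α hθ)
  have h_parts := integral_Ioi_mul_deriv_eq_deriv_mul h_u (fun x hx => hasDerivAt_levyTail α θ hx)
    (by simpa [Pi.mul_def] using h_int.neg)
    (by simpa only [IntegrableOn, Pi.mul_def, mul_assoc] using h_tail_int.const_mul s)
    (tendsto_one_sub_exp_mul_levyTail_nhdsGT_zero hα1 hs.le) h_top
  simp only [mul_neg, integral_neg, mul_assoc, integral_const_mul, h_tail] at h_parts
  change ∫ x in Ioi 0, (1 - exp (-s * x)) * levyDensity α θ x = _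
  rw [neg_eq_iff_eq_neg.1 h_parts, beta, show s + θ + (1 - α) = s + θ + 1 - α by ring]
  ring
end

section
/- For all real 0 < α < 1 and s > 0, ∫₀¹ (1 − u^s) · α (1−u)^{−α−1} du = Γ(s+1)Γ(1−α)/Γ(s+1−α) − 1, where Γ is the real Gamma function; in particular the integral converges. (Together with a unit killing rate, this identifies the Laplace exponent Φ_{α,0}(s) = Γ(s+1)Γ(1−α)/Γ(s+1−α) of the (α, 0) case.) -/
open MeasureTheory Set Filter Topology

/-!
With `F u = (1 - u ^ s) (1 - u) ^ (-α)` one has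
`F' u = (1 - u ^ s) α (1 - u) ^ (-α - 1) - s u ^ (s - 1) (1 - u) ^ (-α)`,
and `F` tends to `1` at `0⁺` and to `0` at `1⁻` (as `1 - u ^ s = O(1 - u)` and `α < 1`).
Integrating by parts therefore turns the integral into `-1 + s B(s, 1 - α)`, and
`s Γ(s) = Γ(s + 1)`.
-/

lemma ofReal_rpow_mul_one_sub_rpow {p q x : ℝ} (hx : x ∈ Ioo 0 1) :
    ((x ^ (p - 1) * (1 - x) ^ (q - 1) : ℝ) : ℂ)
      = (x : ℂ) ^ ((p : ℂ) - 1) * (1 - (x : ℂ)) ^ ((q : ℂ) - 1) := by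
  rw [Complex.ofReal_mul, Complex.ofReal_cpow hx.1.le,
    Complex.ofReal_cpow (sub_nonneg.2 hx.2.le)]
  push_cast
  rfl

lemma integrableOn_rpow_mul_one_sub_rpow {p q : ℝ} (hp : 0 < p) (hq : 0 < q) :
    IntegrableOn (fun x : ℝ => x ^ (p - 1) * (1 - x) ^ (q - 1)) (Ioo 0 1) := by
  have hc : IntegrableOn
      (fun x : ℝ => (x : ℂ) ^ ((p : ℂ) - 1) * (1 - (x : ℂ)) ^ ((q : ℂ) - 1)) (Ioo 0 1) :=
    ((intervalIntegrable_iff_integrableOn_Ioc_of_le zero_le_one).1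
      (Complex.betaIntegral_convergent (by simpa using hp) (by simpa using hq))).mono_set
      Ioo_subset_Ioc_self
  refine IntegrableOn.congr_fun hc.re (fun x hx => ?_) measurableSet_Ioo
  rw [← ofReal_rpow_mul_one_sub_rpow hx, RCLike.re_to_complex, Complex.ofReal_re]

lemma integral_rpow_mul_one_sub_rpow {p q : ℝ} (hp : 0 < p) (hq : 0 < q) :
    ∫ x in Ioo (0 : ℝ) 1, x ^ (p - 1) * (1 - x) ^ (q - 1)
      = Real.Gamma p * Real.Gamma q / Real.Gamma (p + q) := by
  have h : ((∫ x in Ioo (0 : ℝ) 1, x ^ (p - 1) * (1 - x) ^ (q - 1) : ℝ) : ℂ)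
      = Complex.betaIntegral p q := by
    rw [Complex.betaIntegral, intervalIntegral.integral_of_le zero_le_one,
      integral_Ioc_eq_integral_Ioo, ← integral_complex_ofReal]
    exact setIntegral_congr_fun measurableSet_Ioo fun x hx => ofReal_rpow_mul_one_sub_rpow hx
  rw [Complex.betaIntegral_eq_Gamma_mul_div _ _ (by simpa using hp) (by simpa using hq),
    ← Complex.ofReal_add, Complex.Gamma_ofReal, Complex.Gamma_ofReal, Complex.Gamma_ofReal] at h
  exact_mod_cast h

lemma one_sub_rpow_le_max_mul_one_sub {s x : ℝ} (hx : x ∈ Ioo 0 1) :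
    1 - x ^ s ≤ max 1 s * (1 - x) := by
  have hx1 : 0 ≤ 1 - x := sub_nonneg.2 hx.2.le
  rcases le_total s 1 with h | h
  · have hxs : x ≤ x ^ s := by
      simpa using Real.rpow_le_rpow_of_exponent_ge hx.1 hx.2.le h
    nlinarith [le_max_left 1 s]
  · have hxs : 1 + s * (x - 1) ≤ x ^ s := by
      simpa using one_add_mul_self_le_rpow_one_add (by linarith [hx.1] : (-1 : ℝ) ≤ x - 1) h
    nlinarith [le_max_right 1 s]

lemma one_sub_rpow_mul_one_sub_rpow_nonneg {s x : ℝ} (hs : 0 ≤ s) (hx : x ∈ Ioo 0 1) (r : ℝ) :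
    0 ≤ (1 - x ^ s) * (1 - x) ^ r :=
  mul_nonneg (sub_nonneg.2 (Real.rpow_le_one hx.1.le hx.2.le hs))
    (Real.rpow_nonneg (sub_nonneg.2 hx.2.le) r)

lemma one_sub_rpow_mul_one_sub_rpow_le {s x : ℝ} (hx : x ∈ Ioo 0 1) (r : ℝ) :
    (1 - x ^ s) * (1 - x) ^ r ≤ max 1 s * (1 - x) ^ (r + 1) := by
  have hx1 : 0 < 1 - x := sub_pos.2 hx.2
  calc (1 - x ^ s) * (1 - x) ^ r ≤ max 1 s * (1 - x) * (1 - x) ^ r :=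
        mul_le_mul_of_nonneg_right (one_sub_rpow_le_max_mul_one_sub hx) (by positivity)
    _ = max 1 s * (1 - x) ^ (r + 1) := by
        rw [Real.rpow_add_one hx1.ne', mul_assoc, mul_comm (1 - x)]

lemma integrableOn_one_sub_rpow_mul_one_sub_rpow {α s : ℝ} (hα : α < 1) (hs : 0 < s) :
    IntegrableOn (fun u : ℝ => (1 - u ^ s) * (1 - u) ^ (-α - 1)) (Ioo 0 1) := by
  have hdom : IntegrableOn (fun u : ℝ => (1 - u) ^ (-α)) (Ioo 0 1) := by
    simpa [show 1 - α - 1 = -α by ring] using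
      integrableOn_rpow_mul_one_sub_rpow one_pos (sub_pos.2 hα)
  have hcont : ContinuousOn (fun u : ℝ => (1 - u ^ s) * (1 - u) ^ (-α - 1)) (Ioo 0 1) :=
    (continuousOn_const.sub (continuousOn_id.rpow_const fun x hx => Or.inl hx.1.ne')).mul
      ((continuousOn_const.sub continuousOn_id).rpow_const
        fun x hx => Or.inl (sub_pos.2 hx.2).ne')
  refine (hdom.const_mul (max 1 s)).mono' (hcont.aestronglyMeasurable measurableSet_Ioo) ?_
  filter_upwards [ae_restrict_mem measurableSet_Ioo] with x hx
  rw [Real.norm_of_nonneg (one_sub_rpow_mul_one_sub_rpow_nonneg hs.le hx _)]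
  simpa using one_sub_rpow_mul_one_sub_rpow_le hx (-α - 1)

lemma hasDerivAt_one_sub_rpow_mul_one_sub_rpow {α s x : ℝ} (hx : x ∈ Ioo 0 1) :
    HasDerivAt (fun u : ℝ => (1 - u ^ s) * (1 - u) ^ (-α))
      ((1 - x ^ s) * (α * (1 - x) ^ (-α - 1)) - s * x ^ (s - 1) * (1 - x) ^ (-α)) x := by
  have hpow : HasDerivAt (fun u : ℝ => 1 - u ^ s) (-(s * x ^ (s - 1))) x :=
    (Real.hasDerivAt_rpow_const (Or.inl hx.1.ne')).const_sub 1
  have hpow' : HasDerivAt (fun u : ℝ => (1 - u) ^ (-α)) (α * (1 - x) ^ (-α - 1)) x := by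
    have := (Real.hasDerivAt_rpow_const (p := -α) (Or.inl (sub_pos.2 hx.2).ne')).comp x
      ((hasDerivAt_id x).const_sub 1)
    exact this.congr_deriv (by simp)
  exact (hpow.mul hpow').congr_deriv (by ring)

lemma tendsto_one_sub_rpow_mul_one_sub_rpow_nhdsGT_zero {α s : ℝ} (hs : 0 < s) :
    Tendsto (fun u : ℝ => (1 - u ^ s) * (1 - u) ^ (-α)) (𝓝[>] 0) (𝓝 1) := by
  have hcont : ContinuousAt (fun u : ℝ => (1 - u ^ s) * (1 - u) ^ (-α)) 0 :=
    (continuousAt_const.sub (Real.continuousAt_rpow_const 0 s (Or.inr hs.le))).mul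
      ((continuousAt_const.sub continuousAt_id).rpow_const (Or.inl (by norm_num)))
  simpa [Real.zero_rpow hs.ne'] using hcont.tendsto.mono_left nhdsWithin_le_nhds

lemma tendsto_one_sub_rpow_mul_one_sub_rpow_nhdsLT_one {α s : ℝ} (hα : α < 1) (hs : 0 < s) :
    Tendsto (fun u : ℝ => (1 - u ^ s) * (1 - u) ^ (-α)) (𝓝[<] 1) (𝓝 0) := by
  have hbound : Tendsto (fun u : ℝ => max 1 s * (1 - u) ^ (-α + 1)) (𝓝[<] 1) (𝓝 0) := by
    have hcont : ContinuousAt (fun u : ℝ => max 1 s * (1 - u) ^ (-α + 1)) 1 :=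
      continuousAt_const.mul
        ((continuousAt_const.sub continuousAt_id).rpow_const (Or.inr (by linarith)))
    simpa [Real.zero_rpow (by linarith : -α + 1 ≠ 0)] using
      hcont.tendsto.mono_left nhdsWithin_le_nhds
  have hIoo : Ioo 0 1 ∈ 𝓝[<] (1 : ℝ) := Ioo_mem_nhdsLT one_pos
  refine squeeze_zero' ?_ ?_ hbound
  · filter_upwards [hIoo] with x hx using one_sub_rpow_mul_one_sub_rpow_nonneg hs.le hx _
  · filter_upwards [hIoo] with x hx using one_sub_rpow_mul_one_sub_rpow_le hx _

theorem laplace_exponent_alpha_zero_general (α s : ℝ) (hα1 : α < 1) (hs : 0 < s) :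
    IntegrableOn (fun u : ℝ => (1 - u ^ s) * (α * (1 - u) ^ (-α - 1))) (Set.Ioo 0 1)
      ∧ ∫ u in Set.Ioo (0 : ℝ) 1, (1 - u ^ s) * (α * (1 - u) ^ (-α - 1))
        = Real.Gamma (s + 1) * Real.Gamma (1 - α) / Real.Gamma (s + 1 - α) - 1 := by
  set f : ℝ → ℝ := fun u => (1 - u ^ s) * (α * (1 - u) ^ (-α - 1))
  set g : ℝ → ℝ := fun u => s * u ^ (s - 1) * (1 - u) ^ (-α)
  have hexp : 1 - α - 1 = -α := by ring
  have hf : IntegrableOn f (Ioo 0 1) := by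
    simpa only [IntegrableOn, f, mul_left_comm] using
      (integrableOn_one_sub_rpow_mul_one_sub_rpow hα1 hs).const_mul α
  have hg : IntegrableOn g (Ioo 0 1) := by
    simpa only [IntegrableOn, g, hexp, mul_assoc] using
      (integrableOn_rpow_mul_one_sub_rpow hs (sub_pos.2 hα1)).const_mul s
  have hparts : ∫ u in Ioo (0 : ℝ) 1, (f u - g u) = 0 - 1 := by
    rw [← integral_Ioc_eq_integral_Ioo, ← intervalIntegral.integral_of_le zero_le_one]
    exact intervalIntegral.integral_eq_sub_of_hasDerivAt_of_tendsto zero_lt_one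
      (fun x hx => hasDerivAt_one_sub_rpow_mul_one_sub_rpow hx)
      ((intervalIntegrable_iff_integrableOn_Ioo_of_le zero_le_one).2 (hf.sub hg))
      (tendsto_one_sub_rpow_mul_one_sub_rpow_nhdsGT_zero hs)
      (tendsto_one_sub_rpow_mul_one_sub_rpow_nhdsLT_one hα1 hs)
  have hbeta : ∫ u in Ioo (0 : ℝ) 1, g u
      = s * (Real.Gamma s * Real.Gamma (1 - α) / Real.Gamma (s + (1 - α))) := by
    rw [← integral_rpow_mul_one_sub_rpow hs (sub_pos.2 hα1), ← integral_const_mul]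
    simp only [g, hexp, mul_assoc]
  refine ⟨hf, ?_⟩
  rw [integral_sub hf hg, hbeta] at hparts
  rw [Real.Gamma_add_one hs.ne', add_sub_assoc]
  linear_combination hparts

/-- `∫₀¹ (1 − u^s) α (1−u)^{−α−1} du = Γ(s+1)Γ(1−α)/Γ(s+1−α) − 1`;
in particular the integral converges. -/
theorem laplace_exponent_alpha_zero (α s : ℝ) (hα0 : 0 < α) (hα1 : α < 1) (hs : 0 < s) :
    IntegrableOn (fun u : ℝ => (1 - u ^ s) * (α * (1 - u) ^ (-α - 1))) (Set.Ioo 0 1)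
      ∧ ∫ u in Set.Ioo (0 : ℝ) 1, (1 - u ^ s) * (α * (1 - u) ^ (-α - 1))
        = Real.Gamma (s + 1) * Real.Gamma (1 - α) / Real.Gamma (s + 1 - α) - 1 :=
  laplace_exponent_alpha_zero_general α s hα1 hs
end

section
/- For all real 0 < α < 1 and θ ≥ 0, the (α, θ) dislocation density satisfies the regular-variation normalization lim_{ε → 0+} ε^α · ∫_{1/2}^{1−ε} f°_{α,θ}(u) du = 1/Γ(1−α), i.e. ν_{α,θ}([1/2, 1−ε]) ~ ε^{−α}/Γ(1−α) as ε → 0. -/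
/-!
The density has the explicit antiderivative
`P(u) = (u^θ (1−u)^{−α} − u^{−α} (1−u)^θ) / Γ(1−α)` on `(0, 1)`, which vanishes at `u = 1/2`
by symmetry. Hence `ε^α ∫_{1/2}^{1−ε} f° = ((1−ε)^θ − (1−ε)^{−α} ε^{α+θ}) / Γ(1−α)`, and the
right-hand side tends to `1/Γ(1−α)` because `α + θ > 0`.
-/

open Filter Topology

/-- The `(α, θ)` dislocation density `f°_{α,θ}` on `(1/2, 1)`, defined by
`Γ(1−α)·f°_{α,θ}(u) = α(u^θ(1−u)^{−α−1} + u^{−α−1}(1−u)^θ)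
  + θ(u^{θ−1}(1−u)^{−α} + u^{−α}(1−u)^{θ−1})`. -/
noncomputable def dislocationDensity (α θ : ℝ) (u : ℝ) : ℝ :=
  (α * (u ^ θ * (1 - u) ^ (-α - 1) + u ^ (-α - 1) * (1 - u) ^ θ)
    + θ * (u ^ (θ - 1) * (1 - u) ^ (-α) + u ^ (-α) * (1 - u) ^ (θ - 1)))
    / Real.Gamma (1 - α)

noncomputable def dislocationPotential (α θ : ℝ) (u : ℝ) : ℝ :=
  (u ^ θ * (1 - u) ^ (-α) - u ^ (-α) * (1 - u) ^ θ) / Real.Gamma (1 - α)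

lemma dislocationPotential_one_half (α θ : ℝ) : dislocationPotential α θ (1 / 2) = 0 := by
  rw [dislocationPotential, show (1 : ℝ) - 1 / 2 = 1 / 2 by norm_num, mul_comm, sub_self,
    zero_div]

lemma hasDerivAt_dislocationPotential (α θ : ℝ) {u : ℝ} (hu : u ∈ Set.Ioo (0 : ℝ) 1) :
    HasDerivAt (dislocationPotential α θ) (dislocationDensity α θ u) u := by
  have hu0 : u ≠ 0 := hu.1.ne'
  have hu1 : 1 - u ≠ 0 := (sub_pos.mpr hu.2).ne'
  have hsub : HasDerivAt (fun u : ℝ => 1 - u) (-1) u := by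
    simpa using (hasDerivAt_id u).const_sub 1
  have hpow : ∀ p : ℝ, HasDerivAt (fun u : ℝ => u ^ p) (p * u ^ (p - 1)) u :=
    fun p => Real.hasDerivAt_rpow_const (Or.inl hu0)
  have hpow' : ∀ p : ℝ, HasDerivAt (fun u : ℝ => (1 - u) ^ p) (-(p * (1 - u) ^ (p - 1))) u :=
    fun p => by
      simpa [Function.comp_def] using (Real.hasDerivAt_rpow_const (Or.inl hu1)).comp u hsub
  refine ((((hpow θ).mul (hpow' (-α))).sub ((hpow (-α)).mul (hpow' θ))).div_const
    (Real.Gamma (1 - α))).congr_deriv ?_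
  unfold dislocationDensity
  ring

lemma continuousOn_dislocationDensity (α θ : ℝ) :
    ContinuousOn (dislocationDensity α θ) (Set.Ioo 0 1) := by
  have hpow : ∀ p : ℝ, ContinuousOn (fun u : ℝ => u ^ p) (Set.Ioo 0 1) := fun p =>
    ContinuousOn.rpow_const continuousOn_id fun u hu => Or.inl hu.1.ne'
  have hpow' : ∀ p : ℝ, ContinuousOn (fun u : ℝ => (1 - u) ^ p) (Set.Ioo 0 1) := fun p =>
    ContinuousOn.rpow_const (continuousOn_const.sub continuousOn_id)
      fun u hu => Or.inl (sub_pos.mpr hu.2).ne'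
  unfold dislocationDensity
  fun_prop

lemma integral_dislocationDensity (α θ : ℝ) {a b : ℝ} (hab : Set.uIcc a b ⊆ Set.Ioo 0 1) :
    ∫ u in a..b, dislocationDensity α θ u
      = dislocationPotential α θ b - dislocationPotential α θ a :=
  intervalIntegral.integral_eq_sub_of_hasDerivAt
    (fun _ hu => hasDerivAt_dislocationPotential α θ (hab hu))
    ((continuousOn_dislocationDensity α θ).mono hab).intervalIntegrable

lemma rpow_mul_integral_dislocationDensity (α θ : ℝ) {ε : ℝ}
    (hε : ε ∈ Set.Ioo (0 : ℝ) (1 / 2)) :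
    ε ^ α * ∫ u in (1 / 2 : ℝ)..(1 - ε), dislocationDensity α θ u
      = ((1 - ε) ^ θ - (1 - ε) ^ (-α) * ε ^ (α + θ)) / Real.Gamma (1 - α) := by
  obtain ⟨hε0, hε2⟩ := hε
  have hsub : Set.uIcc (1 / 2 : ℝ) (1 - ε) ⊆ Set.Ioo 0 1 := by
    rw [Set.uIcc_of_le (by linarith)]
    exact fun u hu => ⟨by linarith [hu.1], by linarith [hu.2]⟩
  rw [integral_dislocationDensity α θ hsub, dislocationPotential_one_half, sub_zero,
    dislocationPotential, sub_sub_cancel, Real.rpow_add hε0]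
  have hcancel : ε ^ α * ε ^ (-α) = 1 := by
    rw [← Real.rpow_add hε0, add_neg_cancel, Real.rpow_zero]
  linear_combination (1 - ε) ^ θ / Real.Gamma (1 - α) * hcancel

lemma tendsto_one_sub_rpow_sub_mul_rpow_div_nhdsGT (α θ : ℝ) (hαθ : 0 < α + θ) :
    Tendsto (fun ε : ℝ => ((1 - ε) ^ θ - (1 - ε) ^ (-α) * ε ^ (α + θ)) / Real.Gamma (1 - α))
      (𝓝[>] 0) (𝓝 (1 / Real.Gamma (1 - α))) := by
  have h1 : ContinuousAt (fun ε : ℝ => 1 - ε) 0 := by fun_prop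
  have h1ne : (1 : ℝ) - 0 ≠ 0 := by norm_num
  have hcont : ContinuousAt
      (fun ε : ℝ => ((1 - ε) ^ θ - (1 - ε) ^ (-α) * ε ^ (α + θ)) / Real.Gamma (1 - α)) 0 :=
    ((h1.rpow_const (Or.inl h1ne)).sub ((h1.rpow_const (Or.inl h1ne)).mul
      (continuousAt_id.rpow_const (Or.inr hαθ.le)))).div_const _
  have hvalue : ((1 - 0) ^ θ - (1 - 0) ^ (-α) * (0 : ℝ) ^ (α + θ)) / Real.Gamma (1 - α)
      = 1 / Real.Gamma (1 - α) := by
    rw [Real.zero_rpow hαθ.ne']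
    norm_num
  rw [← hvalue]
  exact tendsto_nhdsWithin_of_tendsto_nhds hcont.tendsto

theorem dislocation_measure_normalization_general (α θ : ℝ) (hα0 : 0 < α)
    (hθ : 0 ≤ θ) :
    Filter.Tendsto
      (fun ε : ℝ => ε ^ α * ∫ u in (1 / 2 : ℝ)..(1 - ε), dislocationDensity α θ u)
      (nhdsWithin 0 (Set.Ioi 0)) (nhds (1 / Real.Gamma (1 - α))) := by
  have hclosed : (fun ε : ℝ => ε ^ α * ∫ u in (1 / 2 : ℝ)..(1 - ε), dislocationDensity α θ u)
      =ᶠ[𝓝[>] 0] fun ε => ((1 - ε) ^ θ - (1 - ε) ^ (-α) * ε ^ (α + θ)) / Real.Gamma (1 - α) :=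
    eventually_of_mem (Ioo_mem_nhdsGT (by norm_num))
      fun ε hε => rpow_mul_integral_dislocationDensity α θ hε
  exact (tendsto_one_sub_rpow_sub_mul_rpow_div_nhdsGT α θ (by linarith)).congr' hclosed.symm

/-- the regular-variation normalization
`ν_{α,θ}([1/2, 1−ε]) ~ ε^{−α}/Γ(1−α)` as `ε → 0+`, i.e.
`ε^α · ∫_{1/2}^{1−ε} f°_{α,θ}(u) du → 1/Γ(1−α)`. -/
theorem dislocation_measure_normalization (α θ : ℝ) (hα0 : 0 < α) (hα1 : α < 1)
    (hθ : 0 ≤ θ) :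
    Filter.Tendsto
      (fun ε : ℝ => ε ^ α * ∫ u in (1 / 2 : ℝ)..(1 - ε), dislocationDensity α θ u)
      (nhdsWithin 0 (Set.Ioi 0)) (nhds (1 / Real.Gamma (1 - α))) :=
  dislocation_measure_normalization_general α θ hα0 hθ
end
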